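/- arXiv:1501.02434 — 10 statements merged into one kernel-verified Lean document; each statement's English description precedes it below -/
import Mathlib

section
/- Let B be a unital C*-algebra, a a self-adjoint element of B, and u a unitary in B. If u*au ≥ a and ua u* ≥ a, then u*au = a, i.e. a commutes with u. -/
/-- In a unital C*-algebra, if `a` is self-adjoint, `u` is unitary, and both
`u* a u ≥ a` and `u a u* ≥ a`, then `u* a u = a`, i.e. `a` commutes with `u`. -/
theorem unitary_conj_ge_both_eq {B : Type*} [NormedRing B] [StarRing B] [CStarRing B]
    [CompleteSpace B] [NormedAlgebra ℂ B] [StarModule ℂ B]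
    [PartialOrder B] [StarOrderedRing B]
    (a u : B) (ha : star a = a) (hu₁ : star u * u = 1) (hu₂ : u * star u = 1)
    (h₁ : a ≤ star u * a * u) (h₂ : a ≤ u * a * star u) :
    star u * a * u = a ∧ a * u = u * a := by
  have h₃ : star (star u) * a * star u ≤ star (star u) * (star u * a * u) * star u :=
    star_left_conjugate_le_conjugate h₁ (star u)
  rw [star_star] at h₃
  have key : u * a * star u = a := by
    refine le_antisymm ?_ h₂
    calc u * a * star u ≤ u * (star u * a * u) * star u := h₃
      _ = (u * star u) * a * (u * star u) := by noncomm_ring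
      _ = a := by rw [hu₂]; simp
  have h4 : star u * a * u = a := by
    have h5 := congrArg (fun x => star u * x * u) key
    calc star u * a * u = star u * (u * a * star u) * u := by rw [key]
      _ = (star u * u) * a * (star u * u) := by noncomm_ring
      _ = a := by rw [hu₁]; simp
  refine ⟨h4, ?_⟩
  have := congrArg (fun x => u * x) h4
  calc a * u = u * (star u * a * u) := by rw [← mul_assoc, ← mul_assoc, hu₂, one_mul]
    _ = u * a := by rw [h4]
end

section
/- Let B be a unital C*-algebra and M a maximal abelian *-subalgebra of B. Let P ⊆ B_sa be a set invariant under all unitary conjugations (uPu* = P for every unitary u ∈ B). If Q ⊆ P ∩ M_sa has a least upper bound q within P, then q ∈ M. -/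
/-!
If `u` is a unitary of `M`, conjugation by `u` fixes `Q` pointwise and maps `P` into itself, so
`u q u*` is again an upper bound of `Q` in `P` and `q ≤ u q u*`. Doing the same with `u*` and
conjugating back gives `u q u* ≤ q`, so `q` commutes with every unitary of `M`. By maximality `M`
is norm closed, hence a unital C⋆-algebra, which is spanned by its unitaries; so `q` commutes
with all of `M`, and since `q` is self-adjoint, maximality once more puts `q` in `M`.
-/

/-- `S` is a (not necessarily unital) star-subalgebra of `B`, viewed as a set. -/
def IsStarSubalgSet {B : Type*} [NonUnitalNormedRing B] [StarRing B] [Module ℂ B]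
    (S : Set B) : Prop :=
  (0 : B) ∈ S ∧ (∀ x ∈ S, ∀ y ∈ S, x + y ∈ S) ∧ (∀ (c : ℂ), ∀ x ∈ S, c • x ∈ S) ∧
    (∀ x ∈ S, ∀ y ∈ S, x * y ∈ S) ∧ (∀ x ∈ S, star x ∈ S)

/-- `S` is a maximal abelian star-subalgebra of `B`. -/
def IsMasa {B : Type*} [NonUnitalNormedRing B] [StarRing B] [Module ℂ B]
    (S : Set B) : Prop :=
  IsStarSubalgSet S ∧ (∀ x ∈ S, ∀ y ∈ S, x * y = y * x) ∧
    ∀ T : Set B, IsStarSubalgSet T → (∀ x ∈ T, ∀ y ∈ T, x * y = y * x) → S ⊆ T → T = S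

section StarOrderedRing

variable {R : Type*} [Semiring R] [PartialOrder R] [StarRing R] [StarOrderedRing R]

theorem commute_of_le_unitary_conj {q u : R} (hu : u ∈ unitary R)
    (h : q ≤ u * q * star u) (h' : q ≤ star u * q * u) : Commute u q := by
  rw [commute_unitary_iff_star_right_conjugate hu]
  refine le_antisymm ?_ h
  calc u * q * star u ≤ u * (star u * q * u) * star u := star_right_conjugate_le_conjugate h' u
    _ = (u * star u) * q * (u * star u) := by simp only [mul_assoc]
    _ = q := by rw [Unitary.mul_star_self_of_mem hu, one_mul, mul_one]

theorem IsLeast.le_unitary_conj {P Q : Set R} {q u : R} (hq : IsLeast (upperBounds Q ∩ P) q)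
    (hu : u ∈ unitary R) (huQ : ∀ x ∈ Q, Commute u x) (huq : u * q * star u ∈ P) :
    q ≤ u * q * star u :=
  hq.2 ⟨fun x hx => ((commute_unitary_iff_star_right_conjugate hu).1 (huQ x hx)).symm.trans_le
    (star_right_conjugate_le_conjugate (hq.1.1 hx) u), huq⟩

theorem IsLeast.commute_of_unitary {P Q : Set R} {q u : R} (hq : IsLeast (upperBounds Q ∩ P) q)
    (hP : ∀ v ∈ unitary R, (fun x => v * x * star v) '' P ⊆ P)
    (hu : u ∈ unitary R) (huQ : ∀ x ∈ Q, Commute u x) : Commute u q := by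
  have conj_mem : ∀ v ∈ unitary R, v * q * star v ∈ P := fun v hv =>
    hP v hv ⟨q, hq.1.2, rfl⟩
  have hustar : star u ∈ unitary R := Unitary.star_mem hu
  have hustarQ : ∀ x ∈ Q, Commute (star u) x := fun x hx => by
    rw [commute_unitary_iff_star_right_conjugate hustar, star_star,
      ← commute_unitary_iff_star_left_conjugate hu]
    exact huQ x hx
  refine commute_of_le_unitary_conj hu (hq.le_unitary_conj hu huQ (conj_mem u hu)) ?_
  simpa only [star_star] using hq.le_unitary_conj hustar hustarQ (conj_mem _ hustar)

end StarOrderedRing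

theorem StarSubalgebra.commute_of_forall_unitary {A : Type*} [CStarAlgebra A]
    (S : StarSubalgebra ℂ A) [IsClosed (S : Set A)] {q : A}
    (h : ∀ u ∈ unitary A, u ∈ S → Commute u q) {x : A} (hx : x ∈ S) : Commute x q := by
  suffices ∀ y : S, Commute (y : A) q from this ⟨x, hx⟩
  intro y
  have hy : y ∈ Submodule.span ℂ (unitary S : Set S) := CStarAlgebra.span_unitary S ▸ trivial
  induction hy using Submodule.span_induction with
  | mem u hu => exact h u (Unitary.map_mem S.subtype hu) u.2
  | zero => exact Commute.zero_left q
  | add y z _ _ hy hz => exact hy.add_left hz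
  | smul c y _ hy => exact hy.smul_left c

section Masa

variable {B : Type*} [NormedRing B] [StarRing B] [Algebra ℂ B] [StarModule ℂ B]

theorem StarSubalgebra.isStarSubalgSet (S : StarSubalgebra ℂ B) : IsStarSubalgSet (S : Set B) :=
  ⟨zero_mem S, fun _ hx _ hy => add_mem hx hy, fun c _ hx => SMulMemClass.smul_mem c hx,
    fun _ hx _ hy => mul_mem hx hy, fun _ hx => star_mem hx⟩

namespace IsMasa

variable {M : Set B} (hM : IsMasa M)
include hM

theorem coe_eq_of_subset (S : StarSubalgebra ℂ B) (hS : ∀ x ∈ S, ∀ y ∈ S, x * y = y * x)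
    (hMS : M ⊆ S) : (S : Set B) = M :=
  hM.2.2 S S.isStarSubalgSet hS hMS

theorem mem_of_forall_commute {x : B} [IsStarNormal x] (hx : ∀ m ∈ M, Commute m x) : x ∈ M := by
  obtain ⟨⟨-, -, -, -, hMstar⟩, hMcomm, -⟩ := id hM
  have hstar : ∀ m ∈ M, Commute m (star x) := fun m hm => by
    simpa only [star_star] using (hx (star m) (hMstar m hm)).star_star
  have hcomm : ∀ a ∈ insert x M, ∀ b ∈ insert x M, a * b = b * a := by
    rintro a (rfl | ha) b (rfl | hb)
    exacts [rfl, (hx b hb).symm.eq, (hx a ha).eq, hMcomm a ha b hb]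
  have hcomm_star : ∀ a ∈ insert x M, ∀ b ∈ insert x M, a * star b = star b * a := by
    rintro a (rfl | ha) b (rfl | hb)
    exacts [(star_comm_self' _).symm, (hx _ (hMstar b hb)).symm.eq, (hstar a ha).eq,
      hMcomm a ha _ (hMstar b hb)]
  have := StarAlgebra.isMulCommutative_adjoin ℂ hcomm hcomm_star
  rw [← hM.coe_eq_of_subset (StarAlgebra.adjoin ℂ (insert x M))
    (fun a ha b hb => setLike_mul_comm ha hb)
    ((Set.subset_insert x M).trans (StarAlgebra.subset_adjoin ℂ _))]
  exact StarAlgebra.subset_adjoin ℂ _ (Set.mem_insert x M)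

theorem one_mem : (1 : B) ∈ M :=
  hM.mem_of_forall_commute fun m _ => Commute.one_right m

def toStarSubalgebra : StarSubalgebra ℂ B where
  carrier := M
  mul_mem' {a b} ha hb := hM.1.2.2.2.1 a ha b hb
  add_mem' {a b} ha hb := hM.1.2.1 a ha b hb
  algebraMap_mem' c := by
    simpa only [Algebra.algebraMap_eq_smul_one] using hM.1.2.2.1 c 1 hM.one_mem
  star_mem' {a} ha := hM.1.2.2.2.2 a ha

theorem isClosed [ContinuousStar B] : IsClosed M := by
  let S := hM.toStarSubalgebra
  let : CommSemiring S.topologicalClosure := S.commSemiringTopologicalClosure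
    fun x y => Subtype.ext (hM.2.1 x x.2 y y.2)
  rw [← hM.coe_eq_of_subset S.topologicalClosure
    (fun x hx y hy => congrArg Subtype.val (mul_comm (⟨x, hx⟩ : S.topologicalClosure) ⟨y, hy⟩))
    S.le_topologicalClosure]
  exact S.isClosed_topologicalClosure

end IsMasa

end Masa

theorem lub_within_invariant_set_mem_masa_general {B : Type*} [NormedRing B] [StarRing B]
    [CStarRing B] [CompleteSpace B] [NormedAlgebra ℂ B] [StarModule ℂ B]
    [PartialOrder B] [StarOrderedRing B]
    (M : Set B) (hM : IsMasa M)
    (P : Set B) (hPsa : ∀ x ∈ P, star x = x)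
    (hPinv : ∀ u : B, star u * u = 1 → u * star u = 1 →
      (fun x => u * x * star u) '' P = P)
    (Q : Set B) (hQM : Q ⊆ M)
    (q : B) (hqP : q ∈ P) (hub : ∀ x ∈ Q, x ≤ q)
    (hlub : ∀ p ∈ P, (∀ x ∈ Q, x ≤ p) → q ≤ p) :
    q ∈ M := by
  let : CStarAlgebra B := {}
  have : IsClosed (hM.toStarSubalgebra : Set B) := hM.isClosed
  have hq : IsLeast (upperBounds Q ∩ P) q := ⟨⟨hub, hqP⟩, fun p hp => hlub p hp.2 hp.1⟩
  have hP : ∀ u ∈ unitary B, (fun x => u * x * star u) '' P ⊆ P := fun u hu =>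
    (hPinv u (Unitary.star_mul_self_of_mem hu) (Unitary.mul_star_self_of_mem hu)).le
  have : IsStarNormal q := IsSelfAdjoint.isStarNormal (hPsa q hqP)
  exact hM.mem_of_forall_commute fun m hm => hM.toStarSubalgebra.commute_of_forall_unitary
    (fun u hu huM => hq.commute_of_unitary hP hu fun x hx => hM.2.1 u huM x (hQM hx)) hm

/-- Let `B` be a unital C*-algebra and `M` a m.a.s.a. in `B`.  Let `P` be a set of
self-adjoint elements invariant under all unitary conjugations.  If `Q ⊆ P ∩ M_sa` has a
least upper bound `q` within `P`, then `q ∈ M`. -/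
theorem lub_within_invariant_set_mem_masa {B : Type*} [NormedRing B] [StarRing B]
    [CStarRing B] [CompleteSpace B] [NormedAlgebra ℂ B] [StarModule ℂ B]
    [PartialOrder B] [StarOrderedRing B]
    (M : Set B) (hM : IsMasa M) (h1 : (1 : B) ∈ M)
    (P : Set B) (hPsa : ∀ x ∈ P, star x = x)
    (hPinv : ∀ u : B, star u * u = 1 → u * star u = 1 →
      (fun x => u * x * star u) '' P = P)
    (Q : Set B) (hQP : Q ⊆ P) (hQM : Q ⊆ M)
    (q : B) (hqP : q ∈ P) (hub : ∀ x ∈ Q, x ≤ q)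
    (hlub : ∀ p ∈ P, (∀ x ∈ Q, x ≤ p) → q ≤ p) :
    q ∈ M :=
  lub_within_invariant_set_mem_masa_general M hM P hPsa hPinv Q hQM q hqP hub hlub
end

section
/- Every Rickart C*-algebra has a unit element. -/
/-- Every Rickart C*-algebra has a unit. -/
theorem rickart_has_unit {B : Type*} [NonUnitalNormedRing B] [StarRing B] [CStarRing B]
    [CompleteSpace B] [NormedSpace ℂ B] [IsScalarTower ℂ B B] [SMulCommClass ℂ B B]
    [StarModule ℂ B]
    (hRickart : ∀ a : B, ∃ p : B, star p = p ∧ p * p = p ∧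
      {z : B | a * z = 0} = Set.range (fun z => p * z)) :
    ∃ e : B, ∀ b : B, e * b = b ∧ b * e = b := by
  obtain ⟨p, hstar, hidem, hset⟩ := hRickart 0
  have hleft : ∀ z : B, p * z = z := by
    intro z
    have hz : z ∈ {z : B | (0 : B) * z = 0} := by simp
    rw [hset] at hz
    obtain ⟨w, hw⟩ := hz
    simp only at hw
    rw [← hw, ← mul_assoc, hidem]
  refine ⟨p, fun b => ⟨hleft b, ?_⟩⟩
  calc b * p = star (star p * star b) := by rw [← star_mul, star_star]
    _ = star (star b) := by rw [hstar, hleft]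
    _ = b := star_star b
end

section
/- Let A be a unital C*-algebra in which every maximal abelian *-subalgebra is monotone σ-complete. Then for each x ∈ A, the set P = {e ∈ Proj(A) : xe = 0} is upward directed. -/
/-- The set `S` is monotone σ-complete: every norm-bounded monotone increasing sequence of
self-adjoint elements of `S` has a supremum within the self-adjoint part of `S`. -/
def MonotoneSigmaComplete {B : Type*} [NonUnitalNormedRing B] [StarRing B] [Module ℂ B]
    [PartialOrder B] (S : Set B) : Prop :=
  ∀ a : ℕ → B, (∀ n, a n ∈ S) → (∀ n, star (a n) = a n) → Monotone a →
    (∃ c : ℝ, ∀ n, ‖a n‖ ≤ c) →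
    ∃ b ∈ S, star b = b ∧ (∀ n, a n ≤ b) ∧
      ∀ x ∈ S, star x = x → (∀ n, a n ≤ x) → b ≤ x

lemma exists_maximal_commuting_starClosed_superset {α : Type*} [Mul α] [Star α] (s : Set α)
    (hcomm : ∀ x ∈ s, ∀ y ∈ s, x * y = y * x) (hstar : ∀ x ∈ s, star x ∈ s) :
    ∃ M, s ⊆ M ∧ Maximal (fun M : Set α ↦ (∀ x ∈ M, ∀ y ∈ M, x * y = y * x) ∧
      ∀ x ∈ M, star x ∈ M) M := by
  refine zorn_subset_nonempty {M | (∀ x ∈ M, ∀ y ∈ M, x * y = y * x) ∧ ∀ x ∈ M, star x ∈ M}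
    (fun c hc hchain _ ↦ ⟨⋃₀ c, ⟨?_, ?_⟩, fun _ ↦ Set.subset_sUnion_of_mem⟩) s ⟨hcomm, hstar⟩
  · rintro x ⟨X, hX, hx⟩ y ⟨Y, hY, hy⟩
    rcases hchain.total hX hY with hXY | hYX
    · exact (hc hY).1 x (hXY hx) y hy
    · exact (hc hX).1 x hx y (hYX hy)
  · rintro x ⟨X, hX, hx⟩
    exact ⟨X, hX, (hc hX).2 x hx⟩

lemma StarSubalgebra.isStarSubalgSet_s8 {A : Type*} [NormedRing A] [StarRing A] [NormedAlgebra ℂ A]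
    [StarModule ℂ A] (T : StarSubalgebra ℂ A) : IsStarSubalgSet (T : Set A) :=
  ⟨T.zero_mem, fun _ hx _ hy ↦ T.add_mem hx hy, fun c _ hx ↦ T.smul_mem hx c,
    fun _ hx _ hy ↦ T.mul_mem hx hy, fun _ hx ↦ star_mem hx⟩

theorem exists_isClosed_isMasa_superset {A : Type*} [NormedRing A] [StarRing A]
    [NormedAlgebra ℂ A] [StarModule ℂ A] [ContinuousStar A] (s : Set A)
    (hcomm : ∀ x ∈ s, ∀ y ∈ s, x * y = y * x) (hstar : ∀ x ∈ s, star x ∈ s) :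
    ∃ T : StarSubalgebra ℂ A, IsClosed (T : Set A) ∧ IsMasa (T : Set A) ∧ s ⊆ T := by
  obtain ⟨M, hsM, hM⟩ := exists_maximal_commuting_starClosed_superset s hcomm hstar
  obtain ⟨hMcomm, hMstar⟩ := hM.prop
  set T := (StarAlgebra.adjoin ℂ M).topologicalClosure
  have hMT : M ⊆ T :=
    (StarAlgebra.subset_adjoin ℂ M).trans (StarSubalgebra.le_topologicalClosure _)
  -- `T` lies in the double commutant of `M`, which is commutative because `M` is
  have hTcomm : ∀ x ∈ (T : Set A), ∀ y ∈ (T : Set A), x * y = y * x := by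
    have hMM : M ∪ star M = M :=
      Set.union_eq_left.mpr fun x hx ↦ by simpa using hMstar _ (Set.mem_star.mp hx)
    intro x hx y hy
    have hle := StarSubalgebra.topologicalClosure_adjoin_le_centralizer_centralizer ℂ M
    rw [← SetLike.coe_subset_coe, StarSubalgebra.coe_centralizer_centralizer, hMM] at hle
    exact Set.centralizer_centralizer_comm_of_comm hMcomm x (hle hx) y (hle hy)
  have hTM : M = T := hM.eq_of_subset ⟨hTcomm, fun _ ↦ star_mem⟩ hMT
  refine ⟨T, (StarAlgebra.adjoin ℂ M).isClosed_topologicalClosure,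
    ⟨T.isStarSubalgSet_s8, hTcomm, fun U hU hUcomm hTU ↦ ?_⟩, hsM.trans hMT⟩
  rw [← hTM] at hTU ⊢
  exact (hM.eq_of_subset ⟨hUcomm, hU.2.2.2.2⟩ hTU).symm

/-- On `t ≥ 0` these functions increase to the indicator of `(0, ∞)`; the absolute value only
makes them continuous on all of `ℝ`. -/
noncomputable def supportApprox (n : ℕ) (t : ℝ) : ℝ := n * t / (1 + n * |t|)

lemma supportApprox_eq_mul (n : ℕ) (t : ℝ) :
    supportApprox n t = t * (n / (1 + n * |t|)) := by
  rw [supportApprox, mul_div_assoc', mul_comm t]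

@[fun_prop]
lemma continuous_supportApprox (n : ℕ) : Continuous (supportApprox n) :=
  Continuous.div (by fun_prop) (by fun_prop) fun t ↦ (by positivity : (0 : ℝ) < 1 + n * |t|).ne'

lemma supportApprox_nonneg (n : ℕ) {t : ℝ} (ht : 0 ≤ t) : 0 ≤ supportApprox n t := by
  unfold supportApprox
  positivity

lemma supportApprox_le_one (n : ℕ) (t : ℝ) : supportApprox n t ≤ 1 := by
  rw [supportApprox, div_le_one (by positivity)]
  nlinarith [le_abs_self t, (Nat.cast_nonneg n : (0 : ℝ) ≤ n)]

lemma monotone_supportApprox {t : ℝ} (ht : 0 ≤ t) : Monotone (supportApprox · t) := by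
  intro m n hmn
  have hmn' : (m : ℝ) ≤ n := by exact_mod_cast hmn
  simp only [supportApprox, abs_of_nonneg ht]
  rw [div_le_div_iff₀ (by positivity) (by positivity)]
  nlinarith [mul_nonneg (sub_nonneg.2 hmn') ht]

lemma mul_one_sub_supportApprox_le {n : ℕ} (hn : 0 < n) {t : ℝ} (ht : 0 ≤ t) :
    t * (1 - supportApprox n t) ≤ 1 / n := by
  have hn' : (0 : ℝ) < n := by exact_mod_cast hn
  have h : 1 - supportApprox n t = 1 / (1 + n * t) := by
    rw [supportApprox, abs_of_nonneg ht]
    field_simp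
    ring
  rw [h, mul_one_div, div_le_div_iff₀ (by positivity) hn']
  linarith

section CStarAlgebra

variable {A : Type*} [CStarAlgebra A]

lemma cfc_supportApprox_eq_mul {y : A} (hy : IsSelfAdjoint y) (n : ℕ) :
    cfc (supportApprox n) y = y * cfc (fun t : ℝ ↦ (n : ℝ) / (1 + n * |t|)) y := by
  have hcont : Continuous fun t : ℝ ↦ n / (1 + n * |t|) :=
    continuous_const.div (by fun_prop) fun t ↦ (by positivity : (0 : ℝ) < 1 + n * |t|).ne'
  rw [funext (supportApprox_eq_mul n), cfc_mul (fun t ↦ t) _ y continuousOn_id hcont.continuousOn,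
    cfc_id' ℝ y]

variable [PartialOrder A] [StarOrderedRing A]

lemma mul_le_mul_left_of_commute {c u v : A} (hc : 0 ≤ c) (huv : u ≤ v)
    (hcu : Commute c u) (hcv : Commute c v) : c * u ≤ c * v := by
  simpa [mul_sub] using Commute.mul_nonneg hc (sub_nonneg.2 huv) (hcv.sub_right hcu)

lemma mul_le_mul_right_of_commute {c u v : A} (hc : 0 ≤ c) (huv : u ≤ v)
    (hcu : Commute u c) (hcv : Commute v c) : u * c ≤ v * c := by
  simpa [sub_mul] using Commute.mul_nonneg (sub_nonneg.2 huv) hc (hcv.sub_left hcu)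

lemma eq_zero_of_forall_le_algebraMap {a : A} (ha : 0 ≤ a)
    (h : ∀ ε : ℝ, 0 < ε → a ≤ algebraMap ℝ A ε) : a = 0 := by
  rw [← norm_le_zero_iff]
  refine le_of_forall_gt_imp_ge_of_dense fun ε hε ↦ ?_
  exact (CStarAlgebra.norm_le_iff_le_algebraMap a hε.le ha).2 (h ε hε)

lemma IsStarProjection.le_of_le_of_mul_one_sub_eq_zero {p e y : A} (hp : IsStarProjection p)
    (he : IsStarProjection e) (hpy : p ≤ y) (hy : y * (1 - e) = 0) : p ≤ e := by
  have hself : star (1 - e) = 1 - e := he.one_sub.isSelfAdjoint.star_eq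
  have hconj : (1 - e) * p * (1 - e) = 0 := by
    refine le_antisymm ?_ (by simpa [hself] using star_left_conjugate_nonneg hp.nonneg (1 - e))
    simpa [hself, mul_assoc, hy] using star_left_conjugate_le_conjugate hpy (1 - e)
  have hpe : p * (1 - e) = 0 := by
    rw [← CStarRing.star_mul_self_eq_zero_iff, star_mul, hself, hp.isSelfAdjoint.star_eq,
      mul_assoc, ← mul_assoc p, hp.isIdempotentElem.eq, ← mul_assoc, hconj]
  refine hp.le_of_mul_eq_left he ?_
  rwa [mul_sub, mul_one, sub_eq_zero, eq_comm] at hpe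

variable {y : A}

lemma cfc_supportApprox_nonneg (hy : 0 ≤ y) (n : ℕ) : 0 ≤ cfc (supportApprox n) y :=
  cfc_nonneg fun _ ht ↦ supportApprox_nonneg n (spectrum_nonneg_of_nonneg hy ht)

lemma cfc_supportApprox_le_one (n : ℕ) : cfc (supportApprox n) y ≤ 1 :=
  cfc_le_one _ _ fun t _ ↦ supportApprox_le_one n t

lemma monotone_cfc_supportApprox (hy : 0 ≤ y) : Monotone fun n ↦ cfc (supportApprox n) y :=
  fun _ _ hmn ↦ cfc_mono fun _ ht ↦ monotone_supportApprox (spectrum_nonneg_of_nonneg hy ht) hmn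

variable {b : A} {S : StarSubalgebra ℂ A}

lemma le_one_of_isLeast (hb : IsLeast (upperBounds (Set.range fun n ↦ cfc (supportApprox n) y) ∩
      {c | c ∈ S ∧ IsSelfAdjoint c}) b) : b ≤ 1 := by
  refine hb.2 ⟨?_, S.one_mem, .one A⟩
  rintro _ ⟨n, rfl⟩
  exact cfc_supportApprox_le_one n

variable [IsClosed (S : Set A)]

lemma exists_isLeast_cfc_supportApprox (hS : MonotoneSigmaComplete (S : Set A)) (hyS : y ∈ S)
    (hy : 0 ≤ y) :
    ∃ b, IsLeast (upperBounds (Set.range fun n ↦ cfc (supportApprox n) y) ∩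
      {c | c ∈ S ∧ IsSelfAdjoint c}) b := by
  have hnorm (n : ℕ) : ‖cfc (supportApprox n) y‖ ≤ 1 :=
    (CStarAlgebra.norm_le_one_iff_of_nonneg _ (cfc_supportApprox_nonneg hy n)).2
      (cfc_supportApprox_le_one n)
  obtain ⟨b, hbS, hbsa, hub, hleast⟩ := hS _ (fun _ ↦ cfc_mem _ hyS)
    (fun _ ↦ IsSelfAdjoint.star_eq (cfc_predicate _ y)) (monotone_cfc_supportApprox hy) ⟨1, hnorm⟩
  refine ⟨b, ⟨?_, hbS, hbsa⟩, fun c ⟨hc, hcS, hcsa⟩ ↦ hleast c hcS hcsa fun n ↦ hc ⟨n, rfl⟩⟩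
  rintro _ ⟨n, rfl⟩
  exact hub n

lemma mul_one_sub_eq_zero_of_isLeast (hcomm : ∀ u ∈ S, ∀ v ∈ S, u * v = v * u) (hyS : y ∈ S)
    (hy : 0 ≤ y) (hb : IsLeast (upperBounds (Set.range fun n ↦ cfc (supportApprox n) y) ∩
      {c | c ∈ S ∧ IsSelfAdjoint c}) b) :
    y * (1 - b) = 0 := by
  have hb1 := le_one_of_isLeast hb
  obtain ⟨⟨hub, hbS, -⟩, -⟩ := hb
  have hS1 {u : A} (hu : u ∈ S) : 1 - u ∈ S := S.sub_mem S.one_mem hu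
  refine eq_zero_of_forall_le_algebraMap
    (Commute.mul_nonneg hy (sub_nonneg.2 hb1) (hcomm _ hyS _ (hS1 hbS))) fun ε hε ↦ ?_
  obtain ⟨n, hn⟩ := exists_nat_one_div_lt hε
  calc y * (1 - b) ≤ y * (1 - cfc (supportApprox (n + 1)) y) :=
        mul_le_mul_left_of_commute hy (sub_le_sub_left (hub ⟨n + 1, rfl⟩) 1)
          (hcomm _ hyS _ (hS1 hbS)) (hcomm _ hyS _ (hS1 (cfc_mem _ hyS)))
    _ = cfc (fun t ↦ t * (1 - supportApprox (n + 1) t)) y := by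
        rw [cfc_mul (fun t ↦ t) _ y, cfc_sub (fun _ ↦ 1) _ y, cfc_id' ℝ y, cfc_const_one ℝ y]
    _ ≤ algebraMap ℝ A ε := by
        refine cfc_le_algebraMap _ _ _ fun t ht ↦ le_trans ?_ hn.le
        exact_mod_cast mul_one_sub_supportApprox_le n.succ_pos (spectrum_nonneg_of_nonneg hy ht)

lemma isStarProjection_of_isLeast (hcomm : ∀ u ∈ S, ∀ v ∈ S, u * v = v * u) (hyS : y ∈ S)
    (hy : 0 ≤ y) (hb : IsLeast (upperBounds (Set.range fun n ↦ cfc (supportApprox n) y) ∩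
      {c | c ∈ S ∧ IsSelfAdjoint c}) b) :
    IsStarProjection b := by
  have hyb := mul_one_sub_eq_zero_of_isLeast hcomm hyS hy hb
  have hb1 := le_one_of_isLeast hb
  obtain ⟨⟨hub, hbS, hbsa⟩, hleast⟩ := hb
  have hb0 : 0 ≤ b := (cfc_supportApprox_nonneg hy 0).trans (hub ⟨0, rfl⟩)
  -- each `cfc (supportApprox n) y` has the factor `y`, which `1 - b` annihilates
  have hab (n : ℕ) : cfc (supportApprox n) y * b = cfc (supportApprox n) y := by
    have h := ((Commute.refl y).cfc_real fun t : ℝ ↦ (n : ℝ) / (1 + n * |t|)).eq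
    rw [eq_comm, ← sub_eq_zero, ← mul_one_sub, cfc_supportApprox_eq_mul hy.isSelfAdjoint, ← h,
      mul_assoc, hyb, mul_zero]
  refine ⟨le_antisymm ?_ ?_, hbsa⟩
  · simpa [mul_sub] using Commute.mul_nonneg hb0 (sub_nonneg.2 hb1)
      (hcomm _ hbS _ (S.sub_mem S.one_mem hbS))
  · have hbbsa : IsSelfAdjoint (b * b) := by
      simpa [hbsa.star_eq] using IsSelfAdjoint.star_mul_self b
    refine hleast ⟨?_, S.mul_mem hbS hbS, hbbsa⟩
    rintro _ ⟨n, rfl⟩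
    calc cfc (supportApprox n) y = cfc (supportApprox n) y * b := (hab n).symm
      _ ≤ b * b := mul_le_mul_right_of_commute hb0 (hub ⟨n, rfl⟩)
          (hcomm _ (cfc_mem _ hyS) _ hbS) (hcomm _ hbS _ hbS)

lemma mul_eq_zero_of_isLeast (hcomm : ∀ u ∈ S, ∀ v ∈ S, u * v = v * u) (hyS : y ∈ S)
    (hy : 0 ≤ y) (hb : IsLeast (upperBounds (Set.range fun n ↦ cfc (supportApprox n) y) ∩
      {c | c ∈ S ∧ IsSelfAdjoint c}) b) {z : A} (hzS : z ∈ S) (hz : 0 ≤ z) (hzy : z * y = 0) :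
    z * b = 0 := by
  have hbproj := isStarProjection_of_isLeast hcomm hyS hy hb
  obtain ⟨⟨-, hbS, -⟩, hleast⟩ := hb
  set r : ℝ := ‖z‖ + 1
  have hr : 0 < r := by positivity
  set w := r⁻¹ • z
  have hwS : w ∈ S := by
    have h := S.smul_mem hzS ((r⁻¹ : ℝ) : ℂ)
    rwa [Complex.coe_smul] at h
  have hw0 : 0 ≤ w := smul_nonneg (inv_nonneg.2 hr.le) hz
  have hw1 : w ≤ 1 := by
    refine (CStarAlgebra.norm_le_one_iff_of_nonneg w hw0).1 ?_
    rw [norm_smul, Real.norm_of_nonneg (inv_nonneg.2 hr.le), inv_mul_le_one₀ hr]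
    linarith
  -- `0 ≤ w ≤ 1` is orthogonal to every `cfc (supportApprox n) y`, so `1 - w` bounds them all
  have hbw : b ≤ 1 - w := by
    refine hleast ⟨?_, S.sub_mem S.one_mem hwS, .sub (.one A) (IsSelfAdjoint.of_nonneg hw0)⟩
    rintro _ ⟨n, rfl⟩
    have haw : cfc (supportApprox n) y * w = 0 := by
      rw [← hcomm _ hwS _ (cfc_mem _ hyS), cfc_supportApprox_eq_mul hy.isSelfAdjoint, ← mul_assoc,
        smul_mul_assoc, hzy, smul_zero, zero_mul]
    have h := Commute.mul_nonneg (sub_nonneg.2 (cfc_supportApprox_le_one n)) (sub_nonneg.2 hw1)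
      (hcomm _ (sub_mem (one_mem S) (cfc_mem _ hyS)) _ (sub_mem (one_mem S) hwS))
    rw [sub_mul, one_mul, mul_sub, mul_one, haw, sub_zero, sub_sub, sub_nonneg] at h
    exact le_sub_iff_add_le'.2 h
  have hwb : w * b = 0 := by
    refine le_antisymm ?_ (Commute.mul_nonneg hw0 hbproj.nonneg (hcomm _ hwS _ hbS))
    calc w * b ≤ (1 - b) * b := mul_le_mul_right_of_commute hbproj.nonneg (le_sub_comm.1 hbw)
            (hcomm _ hwS _ hbS) (hcomm _ (S.sub_mem S.one_mem hbS) _ hbS)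
      _ = 0 := hbproj.one_sub_mul_self
  rwa [smul_mul_assoc, smul_eq_zero, or_iff_right (inv_ne_zero hr.ne')] at hwb

end CStarAlgebra

/-- If every m.a.s.a. of a unital C*-algebra `A` is monotone σ-complete, then for each
`x ∈ A` the set of projections `e` with `x * e = 0` is upward directed. -/
theorem annihilating_projections_directed {A : Type*} [NormedRing A] [StarRing A]
    [CStarRing A] [CompleteSpace A] [NormedAlgebra ℂ A] [StarModule ℂ A]
    [PartialOrder A] [StarOrderedRing A]
    (hmasa : ∀ M : Set A, IsMasa M → MonotoneSigmaComplete M) (x : A) :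
    ∀ p, (star p = p ∧ p * p = p ∧ x * p = 0) →
      ∀ q, (star q = q ∧ q * q = q ∧ x * q = 0) →
        ∃ e, (star e = e ∧ e * e = e ∧ x * e = 0) ∧ p ≤ e ∧ q ≤ e := by
  let _ : CStarAlgebra A := { ‹NormedRing A›, ‹StarRing A›, ‹CStarRing A›, ‹CompleteSpace A›,
    ‹NormedAlgebra ℂ A›, ‹StarModule ℂ A› with }
  rintro p ⟨hps, hpp, hxp⟩ q ⟨hqs, hqp, hxq⟩
  have hp : IsStarProjection p := ⟨hpp, hps⟩
  have hq : IsStarProjection q := ⟨hqp, hqs⟩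
  have hy : 0 ≤ p + q := add_nonneg hp.nonneg hq.nonneg
  have hzy : star x * x * (p + q) = 0 := by
    rw [mul_add, mul_assoc, mul_assoc, hxp, hxq, mul_zero, add_zero]
  have hyz : (p + q) * (star x * x) = 0 := by simpa [hps, hqs, mul_assoc] using congr(star $hzy)
  obtain ⟨S, hSc, hSm, hsub⟩ := exists_isClosed_isMasa_superset {p + q, star x * x}
    (by rintro _ (rfl | rfl) _ (rfl | rfl) <;> simp [hzy, hyz])
    (by rintro _ (rfl | rfl) <;> simp [hps, hqs])
  have hyS : p + q ∈ S := hsub (.inl rfl)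
  obtain ⟨b, hb⟩ := exists_isLeast_cfc_supportApprox (hmasa _ hSm) hyS hy
  have hbproj := isStarProjection_of_isLeast hSm.2.1 hyS hy hb
  have hyb := mul_one_sub_eq_zero_of_isLeast hSm.2.1 hyS hy hb
  have hzb :=
    mul_eq_zero_of_isLeast hSm.2.1 hyS hy hb (hsub (.inr rfl)) (star_mul_self_nonneg x) hzy
  refine ⟨b, ⟨hbproj.isSelfAdjoint, hbproj.isIdempotentElem, ?_⟩,
    hp.le_of_le_of_mul_one_sub_eq_zero hbproj (le_add_of_nonneg_right hq.nonneg) hyb,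
    hq.le_of_le_of_mul_one_sub_eq_zero hbproj (le_add_of_nonneg_left hp.nonneg) hyb⟩
  rw [← CStarRing.star_mul_self_eq_zero_iff, star_mul, mul_assoc, ← mul_assoc (star x), hzb,
    mul_zero]
end

section
/- Let A be a unital C*-algebra in which every maximal abelian *-subalgebra is monotone σ-complete. Then for each x ∈ A, the set P = {e ∈ Proj(A) : xe = 0} has a largest element. -/
lemma IsSelfAdjoint.mul_eq_zero_symm {R : Type*} [NonUnitalNonAssocSemiring R] [StarRing R]
    {a b : R} (ha : IsSelfAdjoint a) (hb : IsSelfAdjoint b) (h : a * b = 0) : b * a = 0 := by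
  simpa [ha.star_eq, hb.star_eq] using congr(star $h)

lemma IsStarProjection.mul_eq_zero_of_conjugate_eq_zero {E : Type*} [NonUnitalNormedRing E]
    [StarRing E] [CStarRing E] {e p : E} (he : IsStarProjection e) (hp : IsSelfAdjoint p)
    (h : p * e * p = 0) : e * p = 0 := by
  rw [← CStarRing.star_mul_self_eq_zero_iff, star_mul, hp.star_eq, he.isSelfAdjoint.star_eq,
    mul_assoc, ← mul_assoc e, he.isIdempotentElem.eq, ← mul_assoc, h]

lemma star_mul_self_mul_eq_zero_iff {E : Type*} [NonUnitalNormedRing E] [StarRing E]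
    [CStarRing E] (x e : E) : star x * x * e = 0 ↔ x * e = 0 := by
  refine ⟨fun h => ?_, fun h => by rw [mul_assoc, h, mul_zero]⟩
  rw [← CStarRing.star_mul_self_eq_zero_iff, star_mul, mul_assoc, ← mul_assoc (star x), h,
    mul_zero]

lemma IsChain.forall_mem_sUnion {α : Type*} {c : Set (Set α)} (hc : IsChain (· ⊆ ·) c)
    {r : α → α → Prop} (h : ∀ S ∈ c, ∀ x ∈ S, ∀ y ∈ S, r x y) :
    ∀ x ∈ ⋃₀ c, ∀ y ∈ ⋃₀ c, r x y := by
  rintro x ⟨S, hS, hx⟩ y ⟨T, hT, hy⟩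
  rcases hc.total hS hT with hST | hTS
  · exact h T hT x (hST hx) y hy
  · exact h S hS x hx y (hTS hy)

section Masa

variable {B : Type*} [NonUnitalNormedRing B] [StarRing B] [Module ℂ B]

lemma IsStarSubalgSet.sub_mem {S : Set B} (hS : IsStarSubalgSet S) {x y : B} (hx : x ∈ S)
    (hy : y ∈ S) : x - y ∈ S := by
  simpa [sub_eq_add_neg] using hS.2.1 x hx _ (hS.2.2.1 (-1) y hy)

lemma IsStarSubalgSet.sUnion {c : Set (Set B)} (hc : IsChain (· ⊆ ·) c) (hne : c.Nonempty)
    (h : ∀ S ∈ c, IsStarSubalgSet S) : IsStarSubalgSet (⋃₀ c) := by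
  obtain ⟨S, hS⟩ := hne
  refine ⟨⟨S, hS, (h S hS).1⟩,
    hc.forall_mem_sUnion fun T hT x hx y hy => ⟨T, hT, (h T hT).2.1 x hx y hy⟩,
    fun r x ⟨T, hT, hx⟩ => ⟨T, hT, (h T hT).2.2.1 r x hx⟩,
    hc.forall_mem_sUnion fun T hT x hx y hy => ⟨T, hT, (h T hT).2.2.2.1 x hx y hy⟩,
    fun x ⟨T, hT, hx⟩ => ⟨T, hT, (h T hT).2.2.2.2 x hx⟩⟩

lemma isStarSubalgSet_coe (S : NonUnitalStarSubalgebra ℂ B) : IsStarSubalgSet (S : Set B) :=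
  ⟨zero_mem S, fun _ hx _ hy => add_mem hx hy, fun c _ hx => SMulMemClass.smul_mem c hx,
    fun _ hx _ hy => mul_mem hx hy, fun _ hx => star_mem hx⟩

variable [IsScalarTower ℂ B B] [SMulCommClass ℂ B B] [StarModule ℂ B]

lemma forall_mul_comm_adjoin {s : Set B} (hcomm : ∀ x ∈ s, ∀ y ∈ s, x * y = y * x)
    (hstar : ∀ x ∈ s, ∀ y ∈ s, x * star y = star y * x) :
    ∀ x ∈ (NonUnitalStarAlgebra.adjoin ℂ s : Set B),
      ∀ y ∈ (NonUnitalStarAlgebra.adjoin ℂ s : Set B), x * y = y * x :=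
  have := NonUnitalStarAlgebra.isMulCommutative_adjoin ℂ hcomm hstar
  fun _ hx _ hy => setLike_mul_comm hx hy

lemma IsMasa.subset_of_forall_mul_comm {M s : Set B} (hM : IsMasa M) (hMs : M ⊆ s)
    (hcomm : ∀ x ∈ s, ∀ y ∈ s, x * y = y * x)
    (hstar : ∀ x ∈ s, ∀ y ∈ s, x * star y = star y * x) : s ⊆ M := by
  have hsT := NonUnitalStarAlgebra.subset_adjoin ℂ s
  rw [← hM.2.2 _ (isStarSubalgSet_coe _) (forall_mul_comm_adjoin hcomm hstar) (hMs.trans hsT)]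
  exact hsT

lemma exists_isMasa_superset {s : Set B} (hsa : ∀ x ∈ s, IsSelfAdjoint x)
    (hcomm : ∀ x ∈ s, ∀ y ∈ s, x * y = y * x) : ∃ M, IsMasa M ∧ s ⊆ M := by
  have hstar : ∀ x ∈ s, ∀ y ∈ s, x * star y = star y * x := fun x hx y hy => by
    rw [(hsa y hy).star_eq, hcomm x hx y hy]
  obtain ⟨M, hsM, hM⟩ := zorn_subset_nonempty
    {S : Set B | IsStarSubalgSet S ∧ ∀ x ∈ S, ∀ y ∈ S, x * y = y * x}
    (fun c hcS hc hne => ⟨⋃₀ c, ⟨.sUnion hc hne fun S hS => (hcS hS).1,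
      hc.forall_mem_sUnion fun S hS => (hcS hS).2⟩, fun _ => Set.subset_sUnion_of_mem⟩)
    _ ⟨isStarSubalgSet_coe _, forall_mul_comm_adjoin hcomm hstar⟩
  exact ⟨M, ⟨hM.prop.1, hM.prop.2, fun T hT hTc hMT => (hM.eq_of_subset ⟨hT, hTc⟩ hMT).symm⟩,
    (NonUnitalStarAlgebra.subset_adjoin ℂ s).trans hsM⟩

end Masa

section UnitalMasa

variable {B : Type*} [NormedRing B] [StarRing B] [NormedAlgebra ℂ B] [StarModule ℂ B]

lemma IsMasa.one_mem_s9 {M : Set B} (hM : IsMasa M) : (1 : B) ∈ M := by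
  have hstarM := hM.1.2.2.2.2
  refine hM.subset_of_forall_mul_comm (Set.subset_insert 1 M) ?_ ?_ (Set.mem_insert 1 M)
  · rintro x (rfl | hx) y (rfl | hy)
    · rfl
    · simp
    · simp
    · exact hM.2.1 x hx y hy
  · rintro x (rfl | hx) y (rfl | hy)
    · simp
    · simp
    · simp
    · exact hM.2.1 x hx _ (hstarM y hy)

end UnitalMasa

section CStarAlgebra

variable {A : Type*} [CStarAlgebra A] [PartialOrder A] [StarOrderedRing A]

lemma mul_self_le_self {u : A} (hu0 : 0 ≤ u) (hu1 : u ≤ 1) : u * u ≤ u := by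
  simpa [sq] using CStarAlgebra.pow_antitone hu0 hu1 (show 1 ≤ 2 by norm_num)

lemma add_le_one_of_mul_eq_zero {u v : A} (hu0 : 0 ≤ u) (hu1 : u ≤ 1) (hv1 : v ≤ 1)
    (huv : u * v = 0) (hvu : v * u = 0) : u + v ≤ 1 := by
  have hu : star (1 - u) = 1 - u := by rw [star_sub, star_one, hu0.isSelfAdjoint.star_eq]
  have key : 1 - (u + v) = star (1 - u) * (1 - v) * (1 - u) + (u - u * u) := by
    rw [hu]
    noncomm_ring [huv, hvu]
  rw [← sub_nonneg, key]
  exact add_nonneg (star_left_conjugate_nonneg (sub_nonneg.2 hv1) _)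
    (sub_nonneg.2 (mul_self_le_self hu0 hu1))

lemma mul_self_le_mul_self_of_commute {u b : A} (hu : 0 ≤ u) (hub : u ≤ b) (h : Commute u b) :
    u * u ≤ b * b := by
  have hb : 0 ≤ b := hu.trans hub
  have hbu : 0 ≤ b - u := sub_nonneg.2 hub
  calc u * u ≤ u * b := by
        rw [← sub_nonneg, ← mul_sub]; exact Commute.mul_nonneg hu hbu (h.sub_right (.refl u))
    _ ≤ b * b := by
        rw [← sub_nonneg, ← sub_mul]; exact Commute.mul_nonneg hbu hb ((Commute.refl b).sub_left h)

lemma mul_sqrt_eq_zero {a z : A} (ha : 0 ≤ a) (h : z * a = 0) : z * CFC.sqrt a = 0 := by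
  rw [← CStarRing.mul_star_self_eq_zero_iff, star_mul, (CFC.sqrt_nonneg a).isSelfAdjoint.star_eq,
    mul_assoc, ← mul_assoc (CFC.sqrt a), CFC.sqrt_mul_sqrt_self a ha, ← mul_assoc, h, zero_mul]

section IterateSqrt

variable {a : A}

lemma iterate_sqrt_nonneg (ha : 0 ≤ a) : ∀ k, 0 ≤ CFC.sqrt^[k] a
  | 0 => ha
  | k + 1 => by rw [Function.iterate_succ_apply']; exact CFC.sqrt_nonneg _

lemma iterate_sqrt_le_one (ha : a ≤ 1) : ∀ k, CFC.sqrt^[k] a ≤ 1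
  | 0 => ha
  | k + 1 => by
    rw [Function.iterate_succ_apply', ← CFC.sqrt_one (A := A)]
    exact CFC.sqrt_le_sqrt _ _ (iterate_sqrt_le_one ha k)

lemma iterate_sqrt_succ_mul_self (ha : 0 ≤ a) (k : ℕ) :
    CFC.sqrt^[k + 1] a * CFC.sqrt^[k + 1] a = CFC.sqrt^[k] a := by
  rw [Function.iterate_succ_apply', CFC.sqrt_mul_sqrt_self _ (iterate_sqrt_nonneg ha k)]

lemma monotone_iterate_sqrt (ha0 : 0 ≤ a) (ha1 : a ≤ 1) : Monotone (CFC.sqrt^[·] a) := by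
  refine monotone_nat_of_le_succ fun k => ?_
  rw [← iterate_sqrt_succ_mul_self ha0 k]
  exact mul_self_le_self (iterate_sqrt_nonneg ha0 _) (iterate_sqrt_le_one ha1 _)

lemma Commute.iterate_sqrt_right {z : A} (h : Commute z a) : ∀ k, Commute z (CFC.sqrt^[k] a)
  | 0 => h
  | k + 1 => by
    rw [Function.iterate_succ_apply']
    exact ((h.iterate_sqrt_right k).symm.cfcₙ_nnreal NNReal.sqrt).symm

lemma commute_iterate_sqrt (j k : ℕ) : Commute (CFC.sqrt^[j] a) (CFC.sqrt^[k] a) :=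
  ((Commute.refl a).iterate_sqrt_right j).symm.iterate_sqrt_right k

lemma mul_iterate_sqrt_eq_zero (ha : 0 ≤ a) {z : A} (h : z * a = 0) :
    ∀ k, z * CFC.sqrt^[k] a = 0
  | 0 => h
  | k + 1 => by
    rw [Function.iterate_succ_apply']
    exact mul_sqrt_eq_zero (iterate_sqrt_nonneg ha k) (mul_iterate_sqrt_eq_zero ha h k)

end IterateSqrt

end CStarAlgebra

section SupportProjection

variable {A : Type*} [CStarAlgebra A] [PartialOrder A] [StarOrderedRing A] {M : Set A} {a p : A}

lemma MonotoneSigmaComplete.exists_isLeast_iterate_sqrt (hσ : MonotoneSigmaComplete M)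
    (ha0 : 0 ≤ a) (ha1 : a ≤ 1) (hmem : ∀ k, CFC.sqrt^[k] a ∈ M) :
    ∃ p, IsLeast {m | m ∈ M ∧ star m = m ∧ ∀ k, CFC.sqrt^[k] a ≤ m} p := by
  have hbdd : ∀ k, ‖CFC.sqrt^[k] a‖ ≤ 1 := fun k =>
    (CStarAlgebra.norm_le_one_iff_of_nonneg _ (iterate_sqrt_nonneg ha0 k)).2
      (iterate_sqrt_le_one ha1 k)
  obtain ⟨p, hpM, hpsa, hub, hleast⟩ := hσ _ hmem
    (fun k => (iterate_sqrt_nonneg ha0 k).isSelfAdjoint.star_eq) (monotone_iterate_sqrt ha0 ha1)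
    ⟨1, hbdd⟩
  exact ⟨p, ⟨hpM, hpsa, hub⟩, fun m ⟨hmM, hmsa, hmub⟩ => hleast m hmM hmsa hmub⟩

lemma IsMasa.isStarProjection_of_isLeast_iterate_sqrt (hM : IsMasa M) (ha0 : 0 ≤ a)
    (ha1 : a ≤ 1) (hp : IsLeast {m | m ∈ M ∧ star m = m ∧ ∀ k, CFC.sqrt^[k] a ≤ m} p)
    (hmem : ∀ k, CFC.sqrt^[k] a ∈ M) :
    IsStarProjection p := by
  obtain ⟨⟨hpM, hpsa, hub⟩, hleast⟩ := hp
  have hp0 : 0 ≤ p := ha0.trans (hub 0)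
  have hp1 : p ≤ 1 := hleast ⟨hM.one_mem_s9, star_one A, iterate_sqrt_le_one ha1⟩
  -- `p²` is again an upper bound, since `√^[k] a = (√^[k+1] a)² ≤ p²`
  have hpp : p ≤ p * p := hleast ⟨hM.1.2.2.2.1 p hpM p hpM, by rw [star_mul, hpsa], fun k => by
    rw [← iterate_sqrt_succ_mul_self ha0 k]
    exact mul_self_le_mul_self_of_commute (iterate_sqrt_nonneg ha0 _) (hub _)
      (hM.2.1 _ (hmem _) p hpM)⟩
  exact ⟨le_antisymm (mul_self_le_self hp0 hp1) hpp, hpsa⟩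

lemma IsMasa.mul_eq_zero_of_isLeast_iterate_sqrt (hM : IsMasa M) (ha0 : 0 ≤ a)
    (ha1 : a ≤ 1) (hp : IsLeast {m | m ∈ M ∧ star m = m ∧ ∀ k, CFC.sqrt^[k] a ≤ m} p)
    (hproj : IsStarProjection p) {c : A} (hcM : c ∈ M) (hc0 : 0 ≤ c) (hc1 : c ≤ 1) (hca : c * a = 0) : c * p = 0 := by
  have hcs : ∀ k, c * CFC.sqrt^[k] a = 0 := mul_iterate_sqrt_eq_zero ha0 hca
  have hub : ∀ k, CFC.sqrt^[k] a ≤ 1 - c := fun k =>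
    le_sub_iff_add_le'.2 <| add_le_one_of_mul_eq_zero hc0 hc1 (iterate_sqrt_le_one ha1 k) (hcs k)
      (hc0.isSelfAdjoint.mul_eq_zero_symm (iterate_sqrt_nonneg ha0 k).isSelfAdjoint (hcs k))
  have hpc : p ≤ 1 - c := hp.2 ⟨hM.1.sub_mem hM.one_mem_s9 hcM, by
    rw [star_sub, star_one, hc0.isSelfAdjoint.star_eq], hub⟩
  have h := (hproj.one_sub.mul_right_and_mul_left_of_nonneg_of_le hc0 (le_sub_comm.1 hpc)).1
  rwa [mul_sub, mul_one, sub_eq_self] at h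

end SupportProjection

theorem exists_isStarProjection_mul_eq_self_of_forall_mul_eq_zero {A : Type*} [CStarAlgebra A]
    [PartialOrder A] [StarOrderedRing A]
    (hmasa : ∀ M : Set A, IsMasa M → MonotoneSigmaComplete M) {a : A} (ha0 : 0 ≤ a)
    (ha1 : a ≤ 1) {C : Set A} (hC : C ⊆ Set.Icc 0 1) (hCcomm : C.Pairwise Commute)
    (hCa : ∀ c ∈ C, c * a = 0) :
    ∃ p, IsStarProjection p ∧ a * p = a ∧ ∀ c ∈ C, c * p = 0 := by
  have hsa : ∀ c ∈ C, IsSelfAdjoint c := fun c hc => (hC hc).1.isSelfAdjoint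
  have hCs : ∀ c ∈ C, ∀ k, c * CFC.sqrt^[k] a = 0 ∧ CFC.sqrt^[k] a * c = 0 := fun c hc k =>
    have h := mul_iterate_sqrt_eq_zero ha0 (hCa c hc) k
    ⟨h, (hsa c hc).mul_eq_zero_symm (iterate_sqrt_nonneg ha0 k).isSelfAdjoint h⟩
  obtain ⟨M, hM, hsM⟩ := exists_isMasa_superset (s := Set.range (CFC.sqrt^[·] a) ∪ C)
    (by
      rintro x (⟨k, rfl⟩ | hx)
      exacts [(iterate_sqrt_nonneg ha0 k).isSelfAdjoint, hsa x hx])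
    (by
      rintro x (⟨j, rfl⟩ | hx) y (⟨k, rfl⟩ | hy)
      · exact commute_iterate_sqrt j k
      · rw [(hCs y hy j).1, (hCs y hy j).2]
      · rw [(hCs x hx k).1, (hCs x hx k).2]
      · rcases eq_or_ne x y with rfl | hxy
        exacts [rfl, hCcomm hx hy hxy])
  obtain ⟨p, hp⟩ := (hmasa M hM).exists_isLeast_iterate_sqrt ha0 ha1
    fun k => hsM (.inl ⟨k, rfl⟩)
  have hproj := hM.isStarProjection_of_isLeast_iterate_sqrt ha0 ha1 hp
    fun k => hsM (.inl ⟨k, rfl⟩)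
  exact ⟨p, hproj, (hproj.mul_right_and_mul_left_of_nonneg_of_le ha0 (hp.1.2.2 0)).1,
    fun c hc => hM.mul_eq_zero_of_isLeast_iterate_sqrt ha0 ha1 hp hproj (hsM (.inr hc))
      (hC hc).1 (hC hc).2 (hCa c hc)⟩

section OrthogonalFamily

variable {R : Type*} [NonUnitalNonAssocSemiring R] [StarRing R]

def OrthogonalAnnihilatedFamily (y : R) (D : Set R) : Prop :=
  (∀ d ∈ D, IsStarProjection d ∧ d ≠ 0 ∧ d * y = 0) ∧ D.Pairwise fun d d' => d * d' = 0

lemma exists_maximal_orthogonalAnnihilatedFamily (y : R) :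
    ∃ D, Maximal (OrthogonalAnnihilatedFamily y) D :=
  zorn_subset {D | OrthogonalAnnihilatedFamily y D} fun c hcS hc =>
    ⟨⋃₀ c, ⟨fun d ⟨_, hD, hd⟩ => (hcS hD).1 d hd,
      (Set.pairwise_sUnion hc.directedOn).2 fun _ hD => (hcS hD).2⟩,
      fun _ => Set.subset_sUnion_of_mem⟩

lemma Maximal.eq_zero_of_orthogonalAnnihilatedFamily {y : R} {D : Set R}
    (hD : Maximal (OrthogonalAnnihilatedFamily y) D) {q : R} (hq : IsStarProjection q)
    (hqy : q * y = 0) (hDq : ∀ d ∈ D, d * q = 0) : q = 0 := by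
  by_contra hq0
  have hqD : q ∉ D := fun h => hq0 (by simpa [hq.isIdempotentElem.eq] using hDq q h)
  have hfam : OrthogonalAnnihilatedFamily y (insert q D) := by
    refine ⟨?_, Set.pairwise_insert.2 ⟨hD.prop.2, fun d hd _ => ⟨?_, hDq d hd⟩⟩⟩
    · rintro d (rfl | hd)
      exacts [⟨hq, hq0, hqy⟩, hD.prop.1 d hd]
    · exact (hD.prop.1 d hd).1.isSelfAdjoint.mul_eq_zero_symm hq.isSelfAdjoint (hDq d hd)
  exact hqD ((hD.eq_of_subset hfam (Set.subset_insert q D)).symm ▸ Set.mem_insert q D)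

end OrthogonalFamily

theorem isGreatest_isStarProjection_mul_eq_zero {A : Type*} [CStarAlgebra A]
    [PartialOrder A] [StarOrderedRing A]
    (hmasa : ∀ M : Set A, IsMasa M → MonotoneSigmaComplete M) {y : A} (hy0 : 0 ≤ y)
    (hy1 : y ≤ 1) : ∃ f, IsGreatest {e | IsStarProjection e ∧ y * e = 0} f := by
  obtain ⟨D, hD⟩ := exists_maximal_orthogonalAnnihilatedFamily y
  have hDproj : ∀ d ∈ D, IsStarProjection d := fun d hd => (hD.prop.1 d hd).1
  have hDy : ∀ d ∈ D, d * y = 0 := fun d hd => (hD.prop.1 d hd).2.2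
  have hDcomm : D.Pairwise Commute := fun d hd d' hd' hne =>
    (hDproj d hd).isSelfAdjoint.commute_of_mul_eq_zero (hDproj d' hd').isSelfAdjoint
      (hD.prop.2 hd hd' hne)
  obtain ⟨p, hp, hyp, hDp⟩ := exists_isStarProjection_mul_eq_self_of_forall_mul_eq_zero hmasa
    hy0 hy1 (fun d hd => (hDproj d hd).mem_Icc) hDcomm hDy
  refine ⟨1 - p, ⟨hp.one_sub, by rw [mul_sub, mul_one, hyp, sub_self]⟩, fun e ⟨he, hye⟩ => ?_⟩
  set τ := p * e * p with hτ
  have hτ0 : 0 ≤ τ := conjugate_nonneg_of_nonneg he.nonneg hp.nonneg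
  have hτ1 : τ ≤ 1 := calc
    τ ≤ p * 1 * p := conjugate_le_conjugate_of_nonneg he.le_one hp.nonneg
    _ = p := by rw [mul_one, hp.isIdempotentElem.eq]
    _ ≤ 1 := hp.le_one
  have hyτ : y * τ = 0 := by rw [hτ, ← mul_assoc, ← mul_assoc, hyp, hye, zero_mul]
  have hDτ : ∀ d ∈ D, d * τ = 0 := fun d hd => by rw [hτ, ← mul_assoc, ← mul_assoc, hDp d hd,
    zero_mul, zero_mul]
  obtain ⟨q, hq, hτq, hq_orth⟩ := exists_isStarProjection_mul_eq_self_of_forall_mul_eq_zero hmasa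
    hτ0 hτ1 (C := insert y D) (Set.insert_subset ⟨hy0, hy1⟩ fun d hd => (hDproj d hd).mem_Icc)
    (Set.pairwise_insert.2 ⟨hDcomm, fun d hd _ =>
      have h := (hDproj d hd).isSelfAdjoint.commute_of_mul_eq_zero hy0.isSelfAdjoint (hDy d hd)
      ⟨h.symm, h⟩⟩)
    (Set.forall_mem_insert.2 ⟨hyτ, hDτ⟩)
  have hq0 : q = 0 := hD.eq_zero_of_orthogonalAnnihilatedFamily hq
    (hy0.isSelfAdjoint.mul_eq_zero_symm hq.isSelfAdjoint (hq_orth y (Set.mem_insert y D)))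
    fun d hd => hq_orth d (Set.mem_insert_of_mem y hd)
  have hep : e * p = 0 :=
    he.mul_eq_zero_of_conjugate_eq_zero hp.isSelfAdjoint (by rw [← hτ, ← hτq, hq0, mul_zero])
  exact he.le_of_mul_eq_left hp.one_sub (by rw [mul_sub, mul_one, hep, sub_zero])

/-- If every m.a.s.a. of a unital C*-algebra `A` is monotone σ-complete, then for each
`x ∈ A` the set of projections `e` with `x * e = 0` has a largest element. -/
theorem annihilating_projections_has_largest {A : Type*} [NormedRing A] [StarRing A]
    [CStarRing A] [CompleteSpace A] [NormedAlgebra ℂ A] [StarModule ℂ A]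
    [PartialOrder A] [StarOrderedRing A]
    (hmasa : ∀ M : Set A, IsMasa M → MonotoneSigmaComplete M) (x : A) :
    ∃ f, (star f = f ∧ f * f = f ∧ x * f = 0) ∧
      ∀ e, (star e = e ∧ e * e = e ∧ x * e = 0) → e ≤ f := by
  let _ : CStarAlgebra A := {}
  set x' : A := ‖x‖⁻¹ • x
  have hx' : ‖x'‖ ≤ 1 := by
    rw [norm_smul, norm_inv, norm_norm]
    exact inv_mul_le_one_of_le₀ le_rfl (norm_nonneg x)
  have hy1 : star x' * x' ≤ 1 := by
    rw [← CStarAlgebra.norm_le_one_iff_of_nonneg _ (star_mul_self_nonneg x'),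
      CStarRing.norm_star_mul_self]
    exact mul_le_one₀ hx' (norm_nonneg _) hx'
  have hann : ∀ e, star x' * x' * e = 0 ↔ x * e = 0 := fun e => by
    rw [star_mul_self_mul_eq_zero_iff, smul_mul_assoc, smul_eq_zero, inv_eq_zero, norm_eq_zero,
      or_iff_right_of_imp fun hx => by rw [hx, zero_mul]]
  obtain ⟨f, ⟨hf, hxf⟩, hmax⟩ :=
    isGreatest_isStarProjection_mul_eq_zero hmasa (star_mul_self_nonneg x') hy1
  exact ⟨f, ⟨hf.isSelfAdjoint.star_eq, hf.isIdempotentElem.eq, (hann f).1 hxf⟩,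
    fun e ⟨he_sa, he_idem, hxe⟩ => hmax ⟨⟨he_idem, he_sa⟩, (hann e).2 hxe⟩⟩
end

section
/- Let A be a unital C*-algebra such that every maximal abelian *-subalgebra of A is monotone σ-complete. Then A is a Rickart C*-algebra: for each x ∈ A there is a projection f ∈ A with {z ∈ A : xz = 0} = fA. -/
namespace SW

/-! ### Real bump functions -/

/-- Piecewise-linear bump: `0` on `(-∞, 1/(n+2)]`, `1` on `[1/(n+1), ∞)`. -/
noncomputable def F (n : ℕ) (t : ℝ) : ℝ :=
  min 1 (max (((n : ℝ) + 1) * ((n : ℝ) + 2) * t - ((n : ℝ) + 1)) 0)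

@[fun_prop] lemma F_cont (n : ℕ) : Continuous (F n) := by
  unfold F; fun_prop

lemma F_nonneg (n : ℕ) (t : ℝ) : 0 ≤ F n t :=
  le_min one_pos.le (le_max_right _ _)

lemma F_le_one (n : ℕ) (t : ℝ) : F n t ≤ 1 := min_le_left _ _

lemma F_eq_zero (n : ℕ) {t : ℝ} (ht : t ≤ 1 / ((n : ℝ) + 2)) : F n t = 0 := by
  have h2 : (0:ℝ) < (n : ℝ) + 2 := by positivity
  have : ((n : ℝ) + 1) * ((n : ℝ) + 2) * t - ((n : ℝ) + 1) ≤ 0 := by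
    have : ((n : ℝ) + 1) * ((n : ℝ) + 2) * t ≤ ((n : ℝ) + 1) * ((n : ℝ) + 2) * (1 / ((n : ℝ) + 2)) := by
      have h1 : (0:ℝ) ≤ ((n : ℝ) + 1) * ((n : ℝ) + 2) := by positivity
      exact mul_le_mul_of_nonneg_left ht h1
    have h3 : ((n : ℝ) + 1) * ((n : ℝ) + 2) * (1 / ((n : ℝ) + 2)) = (n : ℝ) + 1 := by
      field_simp
    linarith
  simp [F, max_eq_right this]

lemma F_eq_one (n : ℕ) {t : ℝ} (ht : 1 / ((n : ℝ) + 1) ≤ t) : F n t = 1 := by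
  have h1 : (0:ℝ) < (n : ℝ) + 1 := by positivity
  have : (1:ℝ) ≤ ((n : ℝ) + 1) * ((n : ℝ) + 2) * t - ((n : ℝ) + 1) := by
    have : ((n : ℝ) + 1) * ((n : ℝ) + 2) * (1 / ((n : ℝ) + 1)) ≤ ((n : ℝ) + 1) * ((n : ℝ) + 2) * t := by
      have h2 : (0:ℝ) ≤ ((n : ℝ) + 1) * ((n : ℝ) + 2) := by positivity
      exact mul_le_mul_of_nonneg_left ht h2
    have h3 : ((n : ℝ) + 1) * ((n : ℝ) + 2) * (1 / ((n : ℝ) + 1)) = (n : ℝ) + 2 := by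
      field_simp
    linarith
  have hmax : max (((n : ℝ) + 1) * ((n : ℝ) + 2) * t - ((n : ℝ) + 1)) 0 =
      ((n : ℝ) + 1) * ((n : ℝ) + 2) * t - ((n : ℝ) + 1) := max_eq_left (by linarith)
  simp only [F, hmax]
  exact min_eq_left (by linarith)


lemma F_one_le_of_pos (n : ℕ) {t : ℝ} (ht : 1 / ((n : ℝ) + 2) < t) : F (n + 1) t = 1 := by
  apply F_eq_one
  have : ((n : ℝ) + 1) + 1 = (n : ℝ) + 2 := by ring
  rw [Nat.cast_add, Nat.cast_one, this]
  exact le_of_lt ht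

lemma F_mul_succ (n : ℕ) (t : ℝ) : F n t * F (n + 1) t = F n t := by
  rcases le_or_gt t (1 / ((n : ℝ) + 2)) with h | h
  · rw [F_eq_zero n h, zero_mul]
  · rw [F_one_le_of_pos n h, mul_one]

lemma F_mono_succ (n : ℕ) (t : ℝ) : F n t ≤ F (n + 1) t := by
  rcases le_or_gt t (1 / ((n : ℝ) + 2)) with h | h
  · rw [F_eq_zero n h]; exact F_nonneg _ _
  · rw [F_one_le_of_pos n h]; exact F_le_one _ _

lemma F_le_linear (n : ℕ) {t : ℝ} (ht : 0 ≤ t) : F n t ≤ ((n : ℝ) + 2) * t := by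
  rcases le_or_gt t (1 / ((n : ℝ) + 2)) with h | h
  · rw [F_eq_zero n h]; positivity
  · calc F n t ≤ 1 := F_le_one n t
      _ ≤ ((n : ℝ) + 2) * t := by
          rw [div_lt_iff₀ (by positivity)] at h
          linarith [h]

lemma F_sq_le_linear (n : ℕ) {t : ℝ} (ht : 0 ≤ t) : F n t * F n t ≤ ((n : ℝ) + 2) * t :=
  calc F n t * F n t ≤ 1 * F n t :=
        mul_le_mul_of_nonneg_right (F_le_one n t) (F_nonneg n t)
    _ = F n t := one_mul _
    _ ≤ ((n : ℝ) + 2) * t := F_le_linear n ht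

lemma F_id_bound (n : ℕ) {t : ℝ} (ht : 0 ≤ t) : |t - t * F n t| ≤ 1 / ((n : ℝ) + 1) := by
  have h0 : 0 ≤ t - t * F n t := by
    have := F_le_one n t
    nlinarith [F_nonneg n t]
  rw [abs_of_nonneg h0]
  rcases le_or_gt (1 / ((n : ℝ) + 1)) t with h | h
  · rw [F_eq_one n h]; simp; positivity
  · have := F_nonneg n t
    nlinarith

end SW

section CStar

variable {A : Type*} [CStarAlgebra A] [PartialOrder A] [StarOrderedRing A]

set_option linter.unusedSectionVars false

namespace SW

/-! ### Elementary C*-order facts -/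

lemma conj_le {a b : A} (h : a ≤ b) {c : A} (hc : star c = c) : c * a * c ≤ c * b * c := by
  simpa [hc] using star_left_conjugate_le_conjugate h c

noncomputable def rt (v : A) : A := cfc Real.sqrt v

lemma rt_sa (v : A) : IsSelfAdjoint (rt v) := cfc_predicate _ v

lemma rt_star (v : A) : star (rt v) = rt v := (rt_sa v).star_eq

lemma rt_mul_self {v : A} (hv : 0 ≤ v) : rt v * rt v = v := by
  rw [rt, ← cfc_mul Real.sqrt Real.sqrt v]
  have : cfc (fun t => Real.sqrt t * Real.sqrt t) v = cfc (id : ℝ → ℝ) v := by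
    apply cfc_congr
    intro t ht
    have := spectrum_nonneg_of_nonneg hv ht
    simp [Real.mul_self_sqrt this]
  rw [this, cfc_id ℝ v]

lemma sq_le_self {v : A} (hv : 0 ≤ v) (hv1 : v ≤ 1) : v * v ≤ v := by
  have hs := rt_mul_self hv
  have h1 : v * v = rt v * v * rt v := by
    calc v * v = (rt v * rt v) * (rt v * rt v) := by rw [hs]
      _ = rt v * (rt v * rt v) * rt v := by noncomm_ring
      _ = rt v * v * rt v := by rw [hs]
  have h2 : rt v * v * rt v ≤ rt v * 1 * rt v := conj_le hv1 (rt_star v)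
  rw [h1]
  calc rt v * v * rt v ≤ rt v * 1 * rt v := h2
    _ = v := by rw [mul_one, hs]

lemma le_of_absorb {e v : A} (he1 : e ≤ 1) (hv0 : 0 ≤ v) (hv1 : v ≤ 1)
    (hve : v * e = e) (hev : e * v = e) : e ≤ v := by
  have hvs : star v = v := (IsSelfAdjoint.of_nonneg hv0).star_eq
  have h1 : v * e * v = e := by rw [hve, hev]
  calc e = v * e * v := h1.symm
    _ ≤ v * 1 * v := conj_le he1 hvs
    _ = v * v := by rw [mul_one]
    _ ≤ v := sq_le_self hv0 hv1

/-- projections -/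
lemma proj_nonneg {p : A} (hs : star p = p) (hp : p * p = p) : 0 ≤ p := by
  have : p = star p * p := by rw [hs, hp]
  rw [this]; exact star_mul_self_nonneg p

lemma proj_le_one {p : A} (hs : star p = p) (hp : p * p = p) : p ≤ 1 := by
  have h : 0 ≤ 1 - p := by
    have hs' : star (1 - p) = 1 - p := by simp [hs]
    have h2 : (1 - p) * (1 - p) = 1 - p := by
      have : (1 - p) * (1 - p) = 1 - p - p + p * p := by noncomm_ring
      rw [this, hp]; abel
    calc (0:A) ≤ star (1 - p) * (1 - p) := star_mul_self_nonneg _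
      _ = 1 - p := by rw [hs', h2]
  exact sub_nonneg.mp h

lemma proj_absorb {p q : A} (hps : star p = p) (hpp : p * p = p)
    (hqs : star q = q) (hqq : q * q = q) (hle : p ≤ q) : q * p = p ∧ p * q = p := by
  have h1 : p * q * p ≤ p * 1 * p := conj_le (proj_le_one hqs hqq) hps
  have h2 : p * p * p ≤ p * q * p := conj_le hle hps
  have h3 : p * p * p = p := by rw [hpp, hpp]
  have h4 : p * 1 * p = p := by rw [mul_one, hpp]
  have heq : p * q * p = p :=
    le_antisymm (by simpa [mul_one, hpp] using h1) (by simpa [hpp] using h2)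
  have h5 : (1 - q) * p = 0 := by
    rw [← CStarRing.star_mul_self_eq_zero_iff]
    have e1 : star ((1 - q) * p) = p * (1 - q) := by
      rw [star_mul, star_sub, star_one, hps, hqs]
    rw [e1]
    have e2 : p * (1 - q) * ((1 - q) * p) = p * p - p * q * p - (p * q * p - p * (q * q) * p) := by
      noncomm_ring
    rw [e2, hqq, hpp, heq]
    abel
  constructor
  · have : q * p = p - (1 - q) * p := by noncomm_ring
    rw [this, h5, sub_zero]
  · have e3 : p * (1 - q) = 0 := by
      have := congrArg star h5
      simpa [star_mul, star_sub, star_one, hps, hqs] using this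
    have : p * q = p - p * (1 - q) := by noncomm_ring
    rw [this, e3, sub_zero]




/-! ### The approximate unit sequence -/

variable (a : A)

noncomputable def E (n : ℕ) : A := cfc (F n) a

variable {a}

lemma E_sa (n : ℕ) : IsSelfAdjoint (E a n) := cfc_predicate _ a

lemma E_star (n : ℕ) : star (E a n) = E a n := (E_sa n).star_eq

lemma E_nonneg (n : ℕ) : 0 ≤ E a n := cfc_nonneg fun t _ => F_nonneg n t

lemma E_le_one (ha : 0 ≤ a) (n : ℕ) : E a n ≤ 1 := by
  have hsa : IsSelfAdjoint a := IsSelfAdjoint.of_nonneg ha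
  calc E a n ≤ cfc (fun _ : ℝ => (1:ℝ)) a := cfc_mono (fun t _ => F_le_one n t)
    _ = 1 := cfc_const_one ℝ a

lemma E_norm_le_one (n : ℕ) : ‖E a n‖ ≤ 1 :=
  norm_cfc_le one_pos.le fun t _ => by
    rw [Real.norm_eq_abs, abs_of_nonneg (F_nonneg n t)]; exact F_le_one n t

lemma E_mono_succ (ha : 0 ≤ a) (n : ℕ) : E a n ≤ E a (n + 1) :=
  cfc_mono fun t _ => F_mono_succ n t

lemma E_monotone (ha : 0 ≤ a) : Monotone (E a) :=
  monotone_nat_of_le_succ (E_mono_succ ha)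

lemma E_mul_succ (ha : 0 ≤ a) (n : ℕ) : E a n * E a (n + 1) = E a n := by
  have hsa : IsSelfAdjoint a := IsSelfAdjoint.of_nonneg ha
  rw [E, E, ← cfc_mul (F n) (F (n + 1)) a]
  exact cfc_congr fun t _ => F_mul_succ n t

lemma mul_E (ha : 0 ≤ a) (n : ℕ) : a * E a n = cfc (fun t : ℝ => t * F n t) a := by
  have hsa : IsSelfAdjoint a := IsSelfAdjoint.of_nonneg ha
  have h := cfc_mul (fun s : ℝ => s) (F n) a (by fun_prop) (by fun_prop)
  rw [cfc_id' ℝ a] at h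
  exact h.symm

lemma E_mul (ha : 0 ≤ a) (n : ℕ) : E a n * a = cfc (fun t : ℝ => t * F n t) a := by
  have hsa : IsSelfAdjoint a := IsSelfAdjoint.of_nonneg ha
  have h := cfc_mul (F n) (fun s : ℝ => s) a (by fun_prop) (by fun_prop)
  rw [cfc_id' ℝ a] at h
  rw [E, ← h]
  exact cfc_congr fun t _ => mul_comm _ _

lemma E_comm_a (ha : 0 ≤ a) (n : ℕ) : E a n * a = a * E a n := by
  rw [mul_E ha, E_mul ha]

lemma norm_a_sub_mul_E (ha : 0 ≤ a) (n : ℕ) :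
    ‖a - a * E a n‖ ≤ 1 / ((n : ℝ) + 1) := by
  have hsa : IsSelfAdjoint a := IsSelfAdjoint.of_nonneg ha
  have h2 : a - a * E a n = cfc (fun t : ℝ => t - t * F n t) a := by
    rw [mul_E ha n]
    have h := cfc_sub (fun s : ℝ => s) (fun t : ℝ => t * F n t) a (by fun_prop) (by fun_prop)
    rw [cfc_id' ℝ a] at h
    exact h.symm
  rw [h2]
  exact norm_cfc_le (by positivity) fun t ht => by
    rw [Real.norm_eq_abs]
    exact F_id_bound n (spectrum_nonneg_of_nonneg ha ht)

/-- Key annihilation: if `c * y = 0` then `cfc (F n) c * y = 0`. -/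
lemma cfc_F_ann {c : A} (hc : 0 ≤ c) {y : A} (h : c * y = 0) (n : ℕ) :
    cfc (F n) c * y = 0 := by
  have hsa : IsSelfAdjoint c := IsSelfAdjoint.of_nonneg hc
  set B := cfc (F n) c with hB
  have hBsa : star B = B := (cfc_predicate (F n) c).star_eq
  have key : star (B * y) * (B * y) = star y * (B * B) * y := by
    rw [star_mul, hBsa]
    noncomm_ring
  have hBB : B * B ≤ ((n : ℝ) + 2) • c := by
    rw [hB, ← cfc_mul (F n) (F n) c]
    calc cfc (fun t => F n t * F n t) c ≤ cfc (fun t : ℝ => ((n : ℝ) + 2) * t) c :=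
          cfc_mono fun t ht => F_sq_le_linear n (spectrum_nonneg_of_nonneg hc ht)
      _ = ((n : ℝ) + 2) • c := by
          rw [cfc_const_mul_id (((n : ℝ) + 2)) c]
  have hle : star y * (B * B) * y ≤ star y * (((n : ℝ) + 2) • c) * y :=
    star_left_conjugate_le_conjugate hBB y
  have hzero : star y * (((n : ℝ) + 2) • c) * y = 0 := by
    rw [mul_smul_comm, smul_mul_assoc, mul_assoc, h, mul_zero, smul_zero]
  have h1 : star (B * y) * (B * y) ≤ 0 := by rw [key]; exact hzero ▸ hle
  have h2 : 0 ≤ star (B * y) * (B * y) := star_mul_self_nonneg _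
  have := le_antisymm h1 h2
  exact (CStarRing.star_mul_self_eq_zero_iff _).mp this

lemma cfc_F_ann' {c : A} (hc : 0 ≤ c) {y : A} (h : y * c = 0) (n : ℕ) :
    y * cfc (F n) c = 0 := by
  have hsa : IsSelfAdjoint c := IsSelfAdjoint.of_nonneg hc
  have h' : c * star y = 0 := by
    have := congrArg star h
    simpa [star_mul, hsa.star_eq] using this
  have := cfc_F_ann hc h' n
  have := congrArg star this
  simpa [star_mul, (cfc_predicate (F n) c).star_eq] using this

lemma E_ann {c : A} (hc : 0 ≤ c) {y : A} (h : c * y = 0) (n : ℕ) : E c n * y = 0 :=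
  cfc_F_ann hc h n

lemma E_ann' {c : A} (hc : 0 ≤ c) {y : A} (h : y * c = 0) (n : ℕ) : y * E c n = 0 :=
  cfc_F_ann' hc h n


/-! ### Maximal abelian star subalgebras -/

lemma exists_masa {G : Set A} (hG1 : ∀ g ∈ G, star g = g)
    (hG2 : ∀ g ∈ G, ∀ h ∈ G, g * h = h * g) :
    ∃ M : Set A, IsMasa M ∧ G ⊆ M := by
  classical
  -- the base: the star subalgebra generated by G
  set T₀ : Set A := ((StarAlgebra.adjoin ℂ G : StarSubalgebra ℂ A) : Set A) with hT₀
  have hT₀sub : IsStarSubalgSet T₀ := by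
    refine ⟨?_, ?_, ?_, ?_, ?_⟩
    · exact zero_mem (StarAlgebra.adjoin ℂ G)
    · exact fun x hx y hy => add_mem hx hy
    · exact fun c x hx => SMulMemClass.smul_mem c hx
    · exact fun x hx y hy => mul_mem hx hy
    · exact fun x hx => star_mem hx
  have hT₀comm : ∀ x ∈ T₀, ∀ y ∈ T₀, x * y = y * x := by
    letI : CommRing (StarAlgebra.adjoin ℂ G) :=
      StarAlgebra.adjoinCommRingOfComm ℂ hG2
        (fun g hg h hh => by rw [hG1 h hh]; exact hG2 g hg h hh)
    intro x hx y hy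
    have := mul_comm (⟨x, hx⟩ : StarAlgebra.adjoin ℂ G) ⟨y, hy⟩
    exact congrArg Subtype.val this
  have hGT₀ : G ⊆ T₀ := fun g hg => StarAlgebra.subset_adjoin ℂ G hg
  -- Zorn
  set 𝒮 : Set (Set A) :=
    {T | IsStarSubalgSet T ∧ (∀ x ∈ T, ∀ y ∈ T, x * y = y * x) ∧ T₀ ⊆ T} with h𝒮
  have hzorn : ∀ c ⊆ 𝒮, IsChain (· ⊆ ·) c → c.Nonempty →
      ∃ ub ∈ 𝒮, ∀ s ∈ c, s ⊆ ub := by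
    intro c hc hchain hcne
    obtain ⟨T1, hT1⟩ := hcne
    refine ⟨⋃₀ c, ⟨⟨?_, ?_, ?_, ?_, ?_⟩, ?_, ?_⟩, fun s hs => Set.subset_sUnion_of_mem hs⟩
    · exact ⟨T1, hT1, (hc hT1).1.1⟩
    · rintro x ⟨Tx, hTx, hx⟩ y ⟨Ty, hTy, hy⟩
      rcases hchain.total hTx hTy with h | h
      · exact ⟨Ty, hTy, (hc hTy).1.2.1 x (h hx) y hy⟩
      · exact ⟨Tx, hTx, (hc hTx).1.2.1 x hx y (h hy)⟩
    · rintro cc x ⟨Tx, hTx, hx⟩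
      exact ⟨Tx, hTx, (hc hTx).1.2.2.1 cc x hx⟩
    · rintro x ⟨Tx, hTx, hx⟩ y ⟨Ty, hTy, hy⟩
      rcases hchain.total hTx hTy with h | h
      · exact ⟨Ty, hTy, (hc hTy).1.2.2.2.1 x (h hx) y hy⟩
      · exact ⟨Tx, hTx, (hc hTx).1.2.2.2.1 x hx y (h hy)⟩
    · rintro x ⟨Tx, hTx, hx⟩
      exact ⟨Tx, hTx, (hc hTx).1.2.2.2.2 x hx⟩
    · rintro x ⟨Tx, hTx, hx⟩ y ⟨Ty, hTy, hy⟩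
      rcases hchain.total hTx hTy with h | h
      · exact (hc hTy).2.1 x (h hx) y hy
      · exact (hc hTx).2.1 x hx y (h hy)
    · exact (hc hT1).2.2.trans (Set.subset_sUnion_of_mem hT1)
  obtain ⟨M, -, hMmax⟩ := zorn_subset_nonempty 𝒮 hzorn T₀ ⟨hT₀sub, hT₀comm, subset_rfl⟩
  have hM𝒮 : M ∈ 𝒮 := hMmax.1
  refine ⟨M, ⟨hM𝒮.1, hM𝒮.2.1, ?_⟩, hGT₀.trans hM𝒮.2.2⟩
  intro T hT1 hT2 hMT
  exact Set.Subset.antisymm (hMmax.2 ⟨hT1, hT2, hM𝒮.2.2.trans hMT⟩ hMT) hMT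

variable {M : Set A}

lemma masa_one (hM : IsMasa M) : (1 : A) ∈ M := by
  obtain ⟨⟨h0, hadd, hsmul, hmul, hstar⟩, hcomm, hmax⟩ := hM
  set T : Set A := {y | ∃ m ∈ M, ∃ c : ℂ, y = m + c • (1 : A)} with hT
  have hsm : ∀ (c : ℂ) (y : A), (c • (1:A)) * y = c • y := fun c y => by
    rw [smul_mul_assoc, one_mul]
  have hms : ∀ (c : ℂ) (y : A), y * (c • (1:A)) = c • y := fun c y => by
    rw [mul_smul_comm, mul_one]
  have hMT : M ⊆ T := fun m hm => ⟨m, hm, 0, by simp⟩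
  have hTsub : IsStarSubalgSet T := by
    refine ⟨hMT h0, ?_, ?_, ?_, ?_⟩
    · rintro x ⟨m, hm, c, rfl⟩ y ⟨m', hm', c', rfl⟩
      exact ⟨m + m', hadd m hm m' hm', c + c', by rw [add_smul]; abel⟩
    · rintro c x ⟨m, hm, c', rfl⟩
      exact ⟨c • m, hsmul c m hm, c * c', by rw [smul_add, smul_smul]⟩
    · rintro x ⟨m, hm, c, rfl⟩ y ⟨m', hm', c', rfl⟩
      refine ⟨m * m' + c • m' + c' • m, ?_, c * c', ?_⟩
      · exact hadd _ (hadd _ (hmul m hm m' hm') _ (hsmul c m' hm')) _ (hsmul c' m hm)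
      · rw [add_mul, mul_add, mul_add, hsm, hms, hms, smul_smul, mul_comm c' c]
        abel
    · rintro x ⟨m, hm, c, rfl⟩
      exact ⟨star m, hstar m hm, starRingEnd ℂ c, by
        rw [star_add, star_smul, star_one]; rfl⟩
  have hTcomm : ∀ x ∈ T, ∀ y ∈ T, x * y = y * x := by
    rintro x ⟨m, hm, c, rfl⟩ y ⟨m', hm', c', rfl⟩
    have e1 : (m + c • (1:A)) * (m' + c' • (1:A)) = m * m' + c' • m + c • m' + (c * c') • (1:A) := by
      rw [add_mul, mul_add, mul_add, hsm, hms, hms, smul_smul, mul_comm c' c]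
      abel
    have e2 : (m' + c' • (1:A)) * (m + c • (1:A)) = m' * m + c • m' + c' • m + (c' * c) • (1:A) := by
      rw [add_mul, mul_add, mul_add, hsm, hms, hms, smul_smul, mul_comm c c']
      abel
    rw [e1, e2, hcomm m hm m' hm', mul_comm c c']
    abel
  have := hmax T hTsub hTcomm hMT
  rw [← this]
  exact ⟨0, h0, 1, by simp⟩

lemma masa_isClosed (hM : IsMasa M) : IsClosed M := by
  obtain ⟨⟨h0, hadd, hsmul, hmul, hstar⟩, hcomm, hmax⟩ := hM
  have hsub : M ⊆ closure M := subset_closure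
  have h1 : IsStarSubalgSet (closure M) := by
    refine ⟨hsub h0, ?_, ?_, ?_, ?_⟩
    · intro x hx y hy
      exact map_mem_closure₂ continuous_add hx hy fun a ha b hb => hadd a ha b hb
    · intro c x hx
      exact map_mem_closure (continuous_const_smul c) hx fun a ha => hsmul c a ha
    · intro x hx y hy
      exact map_mem_closure₂ continuous_mul hx hy fun a ha b hb => hmul a ha b hb
    · intro x hx
      exact map_mem_closure continuous_star hx fun a ha => hstar a ha
  have h2 : ∀ x ∈ closure M, ∀ y ∈ closure M, x * y = y * x := by
    have step1 : ∀ m ∈ M, ∀ y ∈ closure M, m * y = y * m := by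
      intro m hm y hy
      have : closure M ⊆ {y | m * y = y * m} :=
        closure_minimal (fun z hz => hcomm m hm z hz)
          (isClosed_eq (continuous_mul_left m) (continuous_mul_right m))
      exact this hy
    intro x hx y hy
    have : closure M ⊆ {x | x * y = y * x} :=
      closure_minimal (fun m hm => step1 m hm y hy)
        (isClosed_eq (continuous_mul_right y) (continuous_mul_left y))
    exact this hx
  have := hmax (closure M) h1 h2 hsub
  rw [← this]
  exact isClosed_closure

lemma masa_smul_real (hM : IsMasa M) {x : A} (hx : x ∈ M) (r : ℝ) : r • x ∈ M := by
  have : (algebraMap ℝ ℂ r) • x = r • x := algebraMap_smul ℂ r x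
  rw [← this]
  exact hM.1.2.2.1 _ x hx

lemma masa_cfc_mem [Nontrivial A] (hM : IsMasa M) {m : A} (hm : m ∈ M) (hmsa : IsSelfAdjoint m)
    {f : ℝ → ℝ} (hf : Continuous f) : cfc f m ∈ M := by
  have h1 : (1:A) ∈ M := masa_one hM
  have hclosed := masa_isClosed hM
  have hpow : ∀ k : ℕ, m ^ k ∈ M := by
    intro k; induction k with
    | zero => simpa [pow_zero] using h1
    | succ k ih => rw [pow_succ]; exact hM.1.2.2.2.1 _ ih _ hm
  have haeval : ∀ p : Polynomial ℝ, Polynomial.aeval m p ∈ M := by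
    intro p
    induction p using Polynomial.induction_on' with
    | add p q hp hq => rw [map_add]; exact hM.1.2.1 _ hp _ hq
    | monomial k c =>
        rw [Polynomial.aeval_monomial]
        have e : algebraMap ℝ A c * m ^ k = c • m ^ k := by
          rw [Algebra.algebraMap_eq_smul_one, smul_mul_assoc, one_mul]
        rw [e]
        exact masa_smul_real hM (hpow k) c
  have hspec : spectrum ℝ m ⊆ Set.Icc (-‖m‖) ‖m‖ := by
    intro t ht
    have := spectrum.norm_le_norm_of_mem ht
    rw [Real.norm_eq_abs] at this
    exact abs_le.mp this
  have key : ∀ ε : ℝ, 0 < ε → ∃ g ∈ M, ‖cfc f m - g‖ ≤ ε := by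
    intro ε hε
    have hW := polynomialFunctions_closure_eq_top (-‖m‖) ‖m‖
    set X : Set ℝ := Set.Icc (-‖m‖) ‖m‖ with hX
    set f' : C(X, ℝ) := ⟨fun t => f t.1, hf.comp continuous_subtype_val⟩ with hf'def
    have hf' : f' ∈ (polynomialFunctions X).topologicalClosure := by rw [hW]; trivial
    have hf'' : f' ∈ closure (polynomialFunctions X : Set C(X, ℝ)) := hf'
    rw [Metric.mem_closure_iff] at hf''
    obtain ⟨g, hgmem, hdist⟩ := hf'' ε hε
    rw [polynomialFunctions_coe] at hgmem
    obtain ⟨p, rfl⟩ := hgmem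
    refine ⟨Polynomial.aeval m p, haeval p, ?_⟩
    have e1 : cfc f m - Polynomial.aeval m p
        = cfc (fun t => f t - Polynomial.eval t p) m := by
      rw [cfc_sub f (fun t => Polynomial.eval t p) m hf.continuousOn
        (Polynomial.continuous p).continuousOn, cfc_polynomial p m]
    rw [e1]
    refine norm_cfc_le hε.le fun t ht => ?_
    have h3 := ContinuousMap.dist_apply_le_dist (f := f')
      (g := Polynomial.toContinuousMapOnAlgHom X p) ⟨t, hspec ht⟩
    have h4 : dist (f t) (Polynomial.eval t p) ≤ dist f' (Polynomial.toContinuousMapOnAlgHom X p) := h3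
    rw [Real.norm_eq_abs, ← Real.dist_eq]
    exact h4.trans hdist.le
  have hmem : cfc f m ∈ closure M := by
    rw [Metric.mem_closure_iff]
    intro ε hε
    obtain ⟨g, hg, hle⟩ := key (ε / 2) (by positivity)
    exact ⟨g, hg, by rw [dist_eq_norm]; linarith⟩
  rwa [hclosed.closure_eq] at hmem


/-! ### Suprema of the approximate units in masas -/

lemma eq_zero_of_norm_le_div {c : A} {C : ℝ}
    (h : ∀ n : ℕ, ‖c‖ ≤ C * (1 / ((n : ℝ) + 1))) : c = 0 := by
  by_contra hc
  have hpos : 0 < ‖c‖ := norm_pos_iff.mpr hc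
  rcases le_or_gt C 0 with hC | hC
  · have := h 0
    simp only [Nat.cast_zero, zero_add, div_one, mul_one] at this
    linarith
  · obtain ⟨n, hn⟩ := exists_nat_gt (C / ‖c‖)
    have h1 : C / ‖c‖ < (n : ℝ) + 1 := hn.trans (by linarith)
    have h2 : C * (1 / ((n : ℝ) + 1)) < ‖c‖ := by
      rw [div_lt_iff₀ hpos] at h1
      rw [mul_one_div, div_lt_iff₀ (by positivity : (0:ℝ) < (n:ℝ) + 1)]
      linarith
    linarith [h n]

/-- The projection property bundle for candidate suprema. -/
def InS (a P : A) : Prop :=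
  star P = P ∧ P * P = P ∧ (∀ n, E a n ≤ P) ∧ (∀ n, P * E a n = E a n)

namespace InS

variable {a P : A}

lemma star_eq (h : InS a P) : star P = P := h.1
lemma idem (h : InS a P) : P * P = P := h.2.1
lemma lub (h : InS a P) (n : ℕ) : E a n ≤ P := h.2.2.1 n
lemma absorb (h : InS a P) (n : ℕ) : P * E a n = E a n := h.2.2.2 n

lemma absorb' (h : InS a P) (n : ℕ) : E a n * P = E a n := by
  have := congrArg star (h.absorb n)
  simpa [star_mul, h.star_eq, E_star] using this

lemma nonneg (h : InS a P) : 0 ≤ P := proj_nonneg h.star_eq h.idem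

lemma le_one (h : InS a P) : P ≤ 1 := proj_le_one h.star_eq h.idem

lemma mul_a (h : InS a P) (ha : 0 ≤ a) : P * a = a := by
  have key : ∀ n : ℕ, ‖P * a - a‖ ≤ (‖P‖ + 1) * (1 / ((n : ℝ) + 1)) := by
    intro n
    have e1 : P * a - a = P * (a - E a n * a) + (E a n * a - a) := by
      rw [mul_sub, ← mul_assoc, h.absorb n]
      abel
    have e2 : ‖a - E a n * a‖ ≤ 1 / ((n : ℝ) + 1) := by
      rw [E_comm_a ha n]
      exact norm_a_sub_mul_E ha n
    calc ‖P * a - a‖ ≤ ‖P * (a - E a n * a)‖ + ‖E a n * a - a‖ := by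
          rw [e1]; exact norm_add_le _ _
      _ ≤ ‖P‖ * ‖a - E a n * a‖ + ‖a - E a n * a‖ := by
          gcongr
          · exact norm_mul_le _ _
          · rw [← norm_neg]; simp
      _ = (‖P‖ + 1) * ‖a - E a n * a‖ := by ring
      _ ≤ (‖P‖ + 1) * (1 / ((n : ℝ) + 1)) := by
          have h0 : (0:ℝ) ≤ ‖P‖ + 1 := by positivity
          exact mul_le_mul_of_nonneg_left e2 h0
  have := eq_zero_of_norm_le_div key
  exact sub_eq_zero.mp this

lemma a_mul (h : InS a P) (ha : 0 ≤ a) : a * P = a := by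
  have := congrArg star (h.mul_a ha)
  simpa [star_mul, h.star_eq, (IsSelfAdjoint.of_nonneg ha).star_eq] using this

end InS

variable {M : Set A}

lemma masa_sup [Nontrivial A] (hM : IsMasa M) (hmsc : MonotoneSigmaComplete M)
    {a : A} (haM : a ∈ M) (ha : 0 ≤ a) :
    ∃ b ∈ M, InS a b ∧ ∀ u ∈ M, star u = u → (∀ n, E a n ≤ u) → b ≤ u := by
  have hasa : IsSelfAdjoint a := IsSelfAdjoint.of_nonneg ha
  have hcomm := hM.2.1
  have hmul := hM.1.2.2.2.1
  have hEM : ∀ n, E a n ∈ M := fun n => masa_cfc_mem hM haM hasa (F_cont n)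
  obtain ⟨b, hbM, hbs, hub, hleast⟩ :=
    hmsc (E a) hEM (fun n => E_star n) (E_monotone ha) ⟨1, fun n => E_norm_le_one n⟩
  have hb1 : b ≤ 1 := hleast 1 (masa_one hM) (star_one A) (fun n => E_le_one ha n)
  have hb0 : 0 ≤ b := (E_nonneg 0).trans (hub 0)
  have habsorb : ∀ n, b * E a n = E a n := by
    intro n
    set s := rt (E a n) with hs
    have hsM : s ∈ M := masa_cfc_mem hM (hEM n) (E_sa n) Real.continuous_sqrt
    have hss : s * s = E a n := rt_mul_self (E_nonneg n)
    have hcsb : s * b = b * s := hcomm s hsM b hbM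
    have hcsE : s * E a (n+1) = E a (n+1) * s := hcomm s hsM _ (hEM (n+1))
    have e1 : s * E a (n+1) * s = E a n * E a (n+1) := by
      rw [hcsE, mul_assoc, hss]
      exact hcomm _ (hEM (n+1)) _ (hEM n)
    have e2 : s * E a (n+1) * s = E a n := by rw [e1, E_mul_succ ha n]
    have e3 : s * b * s = E a n * b := by
      rw [hcsb, mul_assoc, hss]
      exact hcomm b hbM _ (hEM n)
    have h4 : E a n ≤ E a n * b := by
      have := conj_le (hub (n+1)) (rt_star (E a n))
      rw [e2, e3] at this
      exact this
    have h5 : E a n * b ≤ E a n := by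
      have := conj_le hb1 (rt_star (E a n))
      rw [e3, mul_one, hss] at this
      exact this
    have h6 : E a n * b = E a n := le_antisymm h5 h4
    have := congrArg star h6
    simpa [star_mul, hbs, E_star] using this
  have habsorb' : ∀ n, E a n * b = E a n := by
    intro n
    have := congrArg star (habsorb n)
    simpa [star_mul, hbs, E_star] using this
  have hproj : b * b = b := by
    set s := rt b with hs
    have hsM : s ∈ M := masa_cfc_mem hM hbM hbs Real.continuous_sqrt
    have hss : s * s = b := rt_mul_self hb0
    have e3 : s * b * s = b * b := by
      rw [hcomm s hsM b hbM, mul_assoc, hss]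
    have h7 : ∀ n, E a n ≤ b * b := by
      intro n
      have hconj := conj_le (hub n) (rt_star b)
      have e4 : s * E a n * s = E a n := by
        rw [hcomm s hsM _ (hEM n), mul_assoc, hss]
        exact habsorb' n
      rw [e4, e3] at hconj
      exact hconj
    have h8 : b ≤ b * b :=
      hleast (b * b) (hmul b hbM b hbM) (by rw [star_mul, hbs]) h7
    have h9 : b * b ≤ b := by
      have := conj_le hb1 (rt_star b)
      rw [e3, mul_one, hss] at this
      exact this
    exact le_antisymm h9 h8
  exact ⟨b, hbM, ⟨hbs, hproj, hub, habsorb⟩, hleast⟩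


lemma masa_sub_mem (hM : IsMasa M) {x y : A} (hx : x ∈ M) (hy : y ∈ M) : x - y ∈ M := by
  have e : x - y = x + (-1 : ℂ) • y := by
    rw [neg_one_smul, ← sub_eq_add_neg]
  rw [e]
  exact hM.1.2.1 _ hx _ (hM.1.2.2.1 (-1) _ hy)

/-! ### A minimal element of `InS a` via Zorn -/

lemma exists_minimal_InS [Nontrivial A]
    (hmasa : ∀ M : Set A, IsMasa M → MonotoneSigmaComplete M) {a : A} (ha : 0 ≤ a) :
    ∃ P, InS a P ∧ ∀ Q, InS a Q → Q ≤ P → Q = P := by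
  have hasa := IsSelfAdjoint.of_nonneg ha
  set S' : Set Aᵒᵈ := {P | InS a (OrderDual.ofDual P)} with hS'
  have hzorn : ∀ c ⊆ S', IsChain (· ≤ ·) c → ∃ ub ∈ S', ∀ z ∈ c, z ≤ ub := by
    intro c hc hchain
    set G : Set A := insert a (OrderDual.ofDual '' c) with hG
    have hG1 : ∀ g ∈ G, star g = g := by
      rintro g (rfl | ⟨P, hP, rfl⟩)
      · exact hasa.star_eq
      · exact (hc hP).star_eq
    have hG2 : ∀ g ∈ G, ∀ h ∈ G, g * h = h * g := by
      rintro g (rfl | ⟨P, hPc, rfl⟩) h (rfl | ⟨Q, hQc, rfl⟩)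
      · rfl
      · rw [(hc hQc).a_mul ha, (hc hQc).mul_a ha]
      · rw [(hc hPc).a_mul ha, (hc hPc).mul_a ha]
      · rcases eq_or_ne P Q with rfl | hne
        · rfl
        · rcases hchain hPc hQc hne with hle | hle
          · have h2 := proj_absorb (hc hQc).star_eq (hc hQc).idem
              (hc hPc).star_eq (hc hPc).idem hle
            rw [h2.1, h2.2]
          · have h2 := proj_absorb (hc hPc).star_eq (hc hPc).idem
              (hc hQc).star_eq (hc hQc).idem hle
            rw [h2.1, h2.2]
    obtain ⟨W, hW, hGW⟩ := exists_masa hG1 hG2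
    obtain ⟨b, hbW, hbIn, hbleast⟩ := masa_sup hW (hmasa W hW) (hGW (Set.mem_insert a _)) ha
    refine ⟨OrderDual.toDual b, hbIn, ?_⟩
    intro z hz
    exact hbleast (OrderDual.ofDual z) (hGW (Set.mem_insert_of_mem _ ⟨z, hz, rfl⟩))
      (hc hz).star_eq (fun n => (hc hz).lub n)
  obtain ⟨P, hPmax⟩ := zorn_le₀ S' hzorn
  refine ⟨OrderDual.ofDual P, hPmax.1, ?_⟩
  intro Q hQ hQP
  have h1 : P ≤ OrderDual.toDual Q := hQP
  have h2 := hPmax.2 (y := OrderDual.toDual Q) hQ h1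
  exact le_antisymm hQP h2

/-! ### The key annihilation property of the minimal projection -/

lemma minimal_ann [Nontrivial A]
    (hmasa : ∀ M : Set A, IsMasa M → MonotoneSigmaComplete M) {a : A} (ha : 0 ≤ a) :
    ∃ P, InS a P ∧ ∀ y : A, 0 ≤ y → a * y = 0 → P * y = 0 := by
  have hasa := IsSelfAdjoint.of_nonneg ha
  obtain ⟨P, hP, hmin⟩ := exists_minimal_InS hmasa ha
  refine ⟨P, hP, ?_⟩
  intro y hy hay
  have hysa : IsSelfAdjoint y := IsSelfAdjoint.of_nonneg hy
  set y' := P * y * P with hy'def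
  have hy'0 : 0 ≤ y' := by
    have := star_left_conjugate_nonneg hy P
    rwa [hP.star_eq] at this
  have hy'sa : IsSelfAdjoint y' := IsSelfAdjoint.of_nonneg hy'0
  have hya : y * a = 0 := by
    have := congrArg star hay
    simpa [star_mul, hysa.star_eq, hasa.star_eq] using this
  have hay' : a * y' = 0 := by
    rw [hy'def, ← mul_assoc, ← mul_assoc, hP.a_mul ha, hay, zero_mul]
  have hy'a : y' * a = 0 := by
    have := congrArg star hay'
    simpa [star_mul, hy'sa.star_eq, hasa.star_eq] using this
  suffices hy'eq : y' = 0 by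
    have hrt : rt y * rt y = y := rt_mul_self hy
    have h1 : (P * rt y) * star (P * rt y) = 0 := by
      rw [star_mul, rt_star, hP.star_eq]
      calc P * rt y * (rt y * P) = P * (rt y * rt y) * P := by noncomm_ring
        _ = P * y * P := by rw [hrt]
        _ = 0 := by rw [← hy'def, hy'eq]
    have h2 : P * rt y = 0 := (CStarRing.mul_star_self_eq_zero_iff _).mp h1
    calc P * y = P * (rt y * rt y) := by rw [hrt]
      _ = (P * rt y) * rt y := by rw [mul_assoc]
      _ = 0 := by rw [h2, zero_mul]
  -- Step 1: a masa containing `a` and `y'`, with the sup `q` of `E a` inside it.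
  have hGcomm : ∀ g ∈ ({a, y'} : Set A), ∀ h ∈ ({a, y'} : Set A), g * h = h * g := by
    rintro g (rfl | rfl) h (rfl | rfl) <;> simp_all [hay', hy'a]
  have hGsa : ∀ g ∈ ({a, y'} : Set A), star g = g := by
    rintro g (rfl | rfl)
    · exact hasa.star_eq
    · exact hy'sa.star_eq
  obtain ⟨N, hN, hGN⟩ := exists_masa hGsa hGcomm
  have haN : a ∈ N := hGN (by simp)
  have hy'N : y' ∈ N := hGN (by simp)
  obtain ⟨q, hqN, hq, hqleast⟩ := masa_sup hN (hmasa N hN) haN ha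
  have hNcomm := hN.2.1
  -- Step 2: q * y' = 0
  have hEy' : ∀ n, E a n * y' = 0 := fun n => E_ann ha hay' n
  have hy'E : ∀ n, y' * E a n = 0 := fun n => E_ann' ha hy'a n
  have hqy' : q * y' = 0 := by
    have hvN : ∀ m : ℕ, E y' m ∈ N := fun m => masa_cfc_mem hN hy'N hy'sa (F_cont m)
    have hvE : ∀ m n, E y' m * E a n = 0 := fun m n => E_ann hy'0 (hy'E n) m
    have hEv : ∀ m n, E a n * E y' m = 0 := fun m n => E_ann' hy'0 (hEy' n) m
    have hqlev : ∀ m, q ≤ 1 - E y' m := by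
      intro m
      have hv0 : 0 ≤ E y' m := E_nonneg m
      have hv1 : E y' m ≤ 1 := E_le_one hy'0 m
      have hEle : ∀ n, E a n ≤ 1 - E y' m := by
        intro n
        refine le_of_absorb (E_le_one ha n) (sub_nonneg.mpr hv1) (sub_le_self 1 hv0) ?_ ?_
        · rw [sub_mul, one_mul, hvE m n, sub_zero]
        · rw [mul_sub, mul_one, hEv m n, sub_zero]
      refine hqleast _ (masa_sub_mem hN (masa_one hN) (hvN m)) ?_ hEle
      rw [star_sub, star_one, E_star]
    set u := rt y' with hu
    have huN : u ∈ N := masa_cfc_mem hN hy'N hy'sa Real.continuous_sqrt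
    have huu : u * u = y' := rt_mul_self hy'0
    have huqu_nonneg : 0 ≤ u * q * u := by
      have := star_left_conjugate_nonneg hq.nonneg u
      rwa [rt_star] at this
    have hnorm : ∀ m : ℕ, ‖u * q * u‖ ≤ 1 * (1 / ((m : ℝ) + 1)) := by
      intro m
      have hle1 : u * q * u ≤ u * (1 - E y' m) * u := conj_le (hqlev m) (rt_star y')
      have he : u * (1 - E y' m) * u = y' - y' * E y' m := by
        have e1 : u * (1 - E y' m) * u = u * u - u * E y' m * u := by noncomm_ring
        rw [e1, huu, hNcomm u huN _ (hvN m), mul_assoc, huu]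
        rw [hNcomm _ (hvN m) y' hy'N]
      rw [he] at hle1
      have := CStarAlgebra.norm_le_norm_of_nonneg_of_le huqu_nonneg hle1
      rw [one_mul]
      exact this.trans (norm_a_sub_mul_E hy'0 m)
    have huqu : u * q * u = 0 := eq_zero_of_norm_le_div hnorm
    set w := rt q with hw
    have hww : w * w = q := rt_mul_self hq.nonneg
    have h9 : star (w * u) * (w * u) = 0 := by
      rw [star_mul, rt_star, rt_star]
      calc u * w * (w * u) = u * (w * w) * u := by noncomm_ring
        _ = u * q * u := by rw [hww]
        _ = 0 := huqu
    have h10 : w * u = 0 := (CStarRing.star_mul_self_eq_zero_iff _).mp h9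
    have h11 : q * u = 0 := by
      calc q * u = w * (w * u) := by rw [← mul_assoc, hww]
        _ = 0 := by rw [h10, mul_zero]
    calc q * y' = q * (u * u) := by rw [huu]
      _ = (q * u) * u := by rw [mul_assoc]
      _ = 0 := by rw [h11, zero_mul]
  -- Step 3: the element t = P q P and a masa containing a, P, t
  set t := P * q * P with ht
  have hts : star t = t := by
    rw [ht, star_mul, star_mul, hP.star_eq, hq.star_eq, mul_assoc]
  have ht0 : 0 ≤ t := by
    have := star_left_conjugate_nonneg hq.nonneg P
    rwa [hP.star_eq] at this
  have htP : t ≤ P := by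
    have h1 : P * q * P ≤ P * 1 * P := conj_le hq.le_one hP.star_eq
    rwa [mul_one, hP.idem] at h1
  have ht1 : t ≤ 1 := htP.trans hP.le_one
  have htE : ∀ n, t * E a n = E a n := by
    intro n
    rw [ht, mul_assoc, mul_assoc, hP.absorb n, hq.absorb n, hP.absorb n]
  have hEt : ∀ n, E a n * t = E a n := by
    intro n
    have := congrArg star (htE n)
    simpa [star_mul, hts, E_star] using this
  have hta : t * a = a := by
    rw [ht, mul_assoc, mul_assoc, hP.mul_a ha, hq.mul_a ha, hP.mul_a ha]
  have hat : a * t = a := by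
    have := congrArg star hta
    simpa [star_mul, hts, hasa.star_eq] using this
  have hGsa2 : ∀ g ∈ ({a, P, t} : Set A), star g = g := by
    rintro g (rfl | rfl | rfl)
    · exact hasa.star_eq
    · exact hP.star_eq
    · exact hts
  have hGcomm2 : ∀ g ∈ ({a, P, t} : Set A), ∀ h ∈ ({a, P, t} : Set A), g * h = h * g := by
    have hPa : P * a = a := hP.mul_a ha
    have haP : a * P = a := hP.a_mul ha
    have hPt : P * t = t := by rw [ht, ← mul_assoc, ← mul_assoc, hP.idem]
    have htP' : t * P = t := by rw [ht, mul_assoc, mul_assoc, hP.idem, ← mul_assoc]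
    rintro g (rfl | rfl | rfl) h (rfl | rfl | rfl)
    · rfl
    · rw [haP, hPa]
    · rw [hat, hta]
    · rw [hPa, haP]
    · rfl
    · rw [hPt, htP']
    · rw [hta, hat]
    · rw [htP', hPt]
    · rfl
  obtain ⟨L, hL, hGL⟩ := exists_masa hGsa2 hGcomm2
  have haL : a ∈ L := hGL (by simp)
  have htL : t ∈ L := hGL (by simp)
  obtain ⟨s, hsL, hsIn, hsleast⟩ := masa_sup hL (hmasa L hL) haL ha
  have hEt' : ∀ n, E a n ≤ t := by
    intro n
    exact le_of_absorb (E_le_one ha n) ht0 ht1 (htE n) (hEt n)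
  have hst : s ≤ t := hsleast t htL hts hEt'
  have hsP : s = P := hmin s hsIn (hst.trans htP)
  have htPeq : t = P := le_antisymm htP (hsP ▸ hst)
  -- Step 4: (1 - q) * P = 0, so P = P * q, hence P * y' = 0 and y' = 0
  have h12 : star ((1 - q) * P) * ((1 - q) * P) = 0 := by
    rw [star_mul, star_sub, star_one, hq.star_eq, hP.star_eq]
    have e1 : P * (1 - q) * ((1 - q) * P) = P * P - P * q * P - (P * q * P - P * (q * q) * P) := by
      noncomm_ring
    rw [e1, hq.idem, hP.idem, ← ht, htPeq]
    abel
  have h13 : (1 - q) * P = 0 := (CStarRing.star_mul_self_eq_zero_iff _).mp h12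
  have h14 : P = q * P := by
    have : (1 - q) * P = P - q * P := by noncomm_ring
    rw [this] at h13
    exact (sub_eq_zero.mp h13)
  have h15 : P * y' = y' := by
    rw [hy'def, ← mul_assoc, ← mul_assoc, hP.idem]
  calc y' = P * y' := h15.symm
    _ = q * P * y' := by rw [← h14]
    _ = q * y' := by rw [mul_assoc, h15]
    _ = 0 := hqy'

end SW

end CStar

/-- If every m.a.s.a. of a unital C*-algebra `A` is monotone σ-complete, then `A` is a
Rickart C*-algebra. -/
theorem rickart_of_masas_monotone_sigma_complete {A : Type*} [NormedRing A] [StarRing A]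
    [CStarRing A] [CompleteSpace A] [NormedAlgebra ℂ A] [StarModule ℂ A]
    [PartialOrder A] [StarOrderedRing A]
    (hmasa : ∀ M : Set A, IsMasa M → MonotoneSigmaComplete M) (x : A) :
    ∃ f : A, star f = f ∧ f * f = f ∧
      {z : A | x * z = 0} = Set.range (fun z => f * z) := by
  rcases subsingleton_or_nontrivial A with hsub | hnt
  · refine ⟨1, by simp, by simp, ?_⟩
    ext z
    simp only [Set.mem_setOf_eq, Set.mem_range]
    constructor
    · intro _
      exact ⟨z, by rw [one_mul]⟩
    · intro _
      exact Subsingleton.elim _ _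
  · letI : CStarAlgebra A :=
      { ‹NormedRing A›, ‹StarRing A›, ‹CStarRing A›, ‹NormedAlgebra ℂ A›,
        ‹StarModule ℂ A›, ‹CompleteSpace A› with }
    set a := star x * x with hadef
    have ha : 0 ≤ a := star_mul_self_nonneg x
    obtain ⟨P, hP, hann⟩ := SW.minimal_ann hmasa ha
    refine ⟨1 - P, ?_, ?_, ?_⟩
    · rw [star_sub, star_one, hP.star_eq]
    · have e : (1 - P) * (1 - P) = 1 - P - P + P * P := by noncomm_ring
      rw [e, hP.idem]
      abel
    · ext z
      simp only [Set.mem_setOf_eq, Set.mem_range]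
      constructor
      · intro hxz
        have haz : a * z = 0 := by rw [hadef, mul_assoc, hxz, mul_zero]
        have hy0 : 0 ≤ z * star z := mul_star_self_nonneg z
        have hay : a * (z * star z) = 0 := by rw [← mul_assoc, haz, zero_mul]
        have hPy := hann _ hy0 hay
        have h1 : (P * z) * star (P * z) = 0 := by
          rw [star_mul, hP.star_eq]
          calc P * z * (star z * P) = (P * (z * star z)) * P := by noncomm_ring
            _ = 0 := by rw [hPy, zero_mul]
        have h2 : P * z = 0 := (CStarRing.mul_star_self_eq_zero_iff _).mp h1
        exact ⟨z, by rw [sub_mul, one_mul, h2, sub_zero]⟩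
      · rintro ⟨w, rfl⟩
        have haf : a * (1 - P) = 0 := by
          rw [mul_sub, mul_one, hP.a_mul ha, sub_self]
        have h3 : star (x * (1 - P)) * (x * (1 - P)) = 0 := by
          rw [star_mul, star_sub, star_one, hP.star_eq]
          calc (1 - P) * star x * (x * (1 - P))
              = (1 - P) * (a * (1 - P)) := by rw [hadef]; noncomm_ring
            _ = 0 := by rw [haf, mul_zero]
        have hxf : x * (1 - P) = 0 := (CStarRing.star_mul_self_eq_zero_iff _).mp h3
        show x * ((1 - P) * w) = 0
        rw [← mul_assoc, hxf, zero_mul]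
end

section
/- Let A be a unital C*-algebra which is monotone σ-complete. Then A is a Rickart C*-algebra. -/
/-!
Put `c = a⋆a` and let `b` be the supremum of the increasing sequence `eₙ = rampₙ(c)`, where
`rampₙ` vanishes below `2⁻ⁿ` and equals `1` above `2¹⁻ⁿ`. As `rampₙ₊₁ = 1` on the support of
`rampₙ`, we get `b eₙ = eₙ`, hence `eₙ = b eₙ b ≤ b² ≤ b`, so `b` is a projection; as `c eₙ → c`,
also `c (1 - b) = 0`, i.e. `a (1 - b) = 0`. Conversely, if `a z = 0` then `eₙ z = 0`, so
`z⋆ b z = sup z⋆ eₙ z = 0` and `b z = 0`. The key fact is that `x ↦ z⋆ x z` preserves suprema of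
increasing sequences: for invertible `z` it is an order automorphism, and in general the
polarization identity `(T + z)⋆ x (T + z) + (T - z)⋆ x (T - z) = 2 (T⋆ x T + z⋆ x z)`, with `T ± z`
invertible, reduces to that case.
-/

open Set Filter Topology

section OrderedAddGroup

variable {G ι : Type*} [AddCommGroup G] [PartialOrder G] [IsOrderedAddMonoid G]
  [Preorder ι] [IsDirected ι (· ≤ ·)]

theorem isLUB_range_add_of_monotone {a b : ι → G} {s t : G} (hs : IsLUB (range a) s)
    (ht : IsLUB (range b) t) (ha : Monotone a) (hb : Monotone b) :
    IsLUB (range (a + b)) (s + t) := by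
  refine ⟨?_, fun x hx => ?_⟩
  · rintro _ ⟨i, rfl⟩
    exact add_le_add (hs.1 ⟨i, rfl⟩) (ht.1 ⟨i, rfl⟩)
  have hs_le : ∀ j, s ≤ x - b j := fun j => hs.2 <| by
    rintro _ ⟨i, rfl⟩
    obtain ⟨k, hik, hjk⟩ := directed_of (· ≤ ·) i j
    exact le_sub_iff_add_le.mpr <| (add_le_add (ha hik) (hb hjk)).trans (hx ⟨k, rfl⟩)
  have ht_le : t ≤ x - s := ht.2 <| by
    rintro _ ⟨j, rfl⟩
    exact le_sub_comm.mp (hs_le j)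
  exact le_sub_iff_add_le'.mp ht_le

end OrderedAddGroup

section StarOrderedRing

variable {R : Type*} [Ring R] [StarRing R] [PartialOrder R] [StarOrderedRing R]

theorem IsUnit.star_left_conjugate_le_conjugate_iff {u : R} (hu : IsUnit u) {x y : R} :
    star u * x * u ≤ star u * y * u ↔ x ≤ y := by
  rw [← sub_nonneg, ← sub_mul, ← mul_sub, hu.star_left_conjugate_nonneg_iff, sub_nonneg]

def Units.starConjOrderIso (u : Rˣ) : R ≃o R where
  toFun x := star (u : R) * x * u
  invFun x := star (↑u⁻¹ : R) * x * ↑u⁻¹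
  left_inv x := by
    simp only [← mul_assoc, ← star_mul, Units.mul_inv, star_one, one_mul]
    simp [mul_assoc]
  right_inv x := by
    simp only [← mul_assoc, ← star_mul, Units.inv_mul, star_one, one_mul]
    simp [mul_assoc]
  map_rel_iff' := u.isUnit.star_left_conjugate_le_conjugate_iff

theorem IsLUB.star_conjugate_of_isUnit {ι : Type*} {a : ι → R} {s u : R}
    (h : IsLUB (range a) s) (hu : IsUnit u) :
    IsLUB (range fun i => star u * a i * u) (star u * s * u) := by
  obtain ⟨u, rfl⟩ := hu
  have := u.starConjOrderIso.isLUB_image'.mpr h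
  rwa [← range_comp] at this

end StarOrderedRing

theorem exists_isUnit_add_and_isUnit_sub {A : Type*} [NormedRing A] [NormedAlgebra ℝ A]
    [CompleteSpace A] (z : A) : ∃ T : A, IsUnit (T + z) ∧ IsUnit (T - z) := by
  set k : ℝ := ‖z‖ * ‖(1 : A)‖ + 1
  have hk : ∀ r : ℝ, ‖r‖ = k → IsUnit (algebraMap ℝ A r - z) := fun r hr =>
    spectrum.mem_resolventSet_iff.mp <| spectrum.mem_resolventSet_of_norm_lt_mul (by linarith)
  have hk_norm : ‖k‖ = k := Real.norm_of_nonneg (by positivity)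
  refine ⟨algebraMap ℝ A k, ?_, hk k hk_norm⟩
  simpa [sub_eq_add_neg, add_comm] using (hk (-k) (by rw [norm_neg]; exact hk_norm)).neg

theorem mul_eq_zero_of_star_mul_self_mul_eq_zero {R : Type*} [NonUnitalNormedRing R] [StarRing R]
    [CStarRing R] {a p : R} (h : star a * a * p = 0) : a * p = 0 := by
  rw [← CStarRing.star_mul_self_eq_zero_iff, star_mul, mul_assoc, ← mul_assoc (star a), h,
    mul_zero]

noncomputable def ramp (n : ℕ) (t : ℝ) : ℝ := min 1 (max 0 (2 ^ n * t - 1))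

@[fun_prop]
theorem continuous_ramp (n : ℕ) : Continuous (ramp n) := by
  unfold ramp; fun_prop

theorem ramp_nonneg (n : ℕ) (t : ℝ) : 0 ≤ ramp n t :=
  le_min zero_le_one (le_max_left _ _)

theorem ramp_le_one (n : ℕ) (t : ℝ) : ramp n t ≤ 1 :=
  min_le_left _ _

theorem ramp_eq_zero_of_le {n : ℕ} {t : ℝ} (ht : t ≤ (2 ^ n)⁻¹) : ramp n t = 0 := by
  have : 2 ^ n * t ≤ 1 := by
    simpa [mul_inv_cancel₀] using mul_le_mul_of_nonneg_left ht (by positivity : (0 : ℝ) ≤ 2 ^ n)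
  simp [ramp, max_eq_left (sub_nonpos.mpr this)]

theorem ramp_eventuallyEq_zero (n : ℕ) : ramp n =ᶠ[𝓝 0] 0 := by
  filter_upwards [Iio_mem_nhds (by positivity : (0 : ℝ) < (2 ^ n)⁻¹)] with t ht
  exact ramp_eq_zero_of_le ht.le

theorem monotone_ramp (t : ℝ) : Monotone fun n => ramp n t := by
  intro m n hmn
  show ramp m t ≤ ramp n t
  rcases le_or_gt t 0 with ht | ht
  · rw [ramp_eq_zero_of_le (ht.trans (by positivity))]
    exact ramp_nonneg n t
  · have : (2 : ℝ) ^ m * t ≤ 2 ^ n * t :=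
      mul_le_mul_of_nonneg_right (pow_le_pow_right₀ one_le_two hmn) ht.le
    exact min_le_min_left _ (max_le_max_left _ (sub_le_sub_right this 1))

theorem ramp_succ_mul_ramp (n : ℕ) (t : ℝ) : ramp (n + 1) t * ramp n t = ramp n t := by
  rcases le_or_gt t (2 ^ n)⁻¹ with ht | ht
  · simp [ramp_eq_zero_of_le ht]
  · have : 1 < 2 ^ n * t := by
      rwa [inv_lt_iff_one_lt_mul₀' (by positivity)] at ht
    have h1 : ramp (n + 1) t = 1 := by
      simp only [ramp, pow_succ]
      rw [max_eq_right (by nlinarith), min_eq_left (by nlinarith)]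
    rw [h1, one_mul]

theorem abs_sub_mul_ramp_le {t : ℝ} (ht : 0 ≤ t) (n : ℕ) : |t - t * ramp n t| ≤ 2 * 2⁻¹ ^ n := by
  have h2n : (0 : ℝ) < 2 ^ n := by positivity
  rw [abs_of_nonneg (by nlinarith [ramp_le_one n t])]
  rcases le_or_gt (2 ^ n * t) 2 with hle | hlt
  · have : t ≤ 2 * 2⁻¹ ^ n := by
      rw [inv_pow, ← div_eq_mul_inv, le_div_iff₀ h2n]; linarith
    nlinarith [ramp_nonneg n t]
  · have : ramp n t = 1 := by
      simp only [ramp]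
      rw [max_eq_right (by linarith), min_eq_left (by linarith)]
    rw [this, mul_one, sub_self]
    positivity

section CStarAlgebra

variable {A : Type*} [CStarAlgebra A]

theorem cfc_mul_eq_zero_of_mul_eq_zero {f : ℝ → ℝ} (hf : Continuous f) (hf0 : f =ᶠ[𝓝 0] 0)
    {c z : A} (hc : IsSelfAdjoint c) (hcz : c * z = 0) : cfc f c * z = 0 := by
  have hg : Continuous fun t => f t / t := continuous_iff_continuousAt.2 fun t => by
    rcases eq_or_ne t 0 with rfl | ht
    · refine (continuousAt_const (y := (0 : ℝ))).congr ?_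
      filter_upwards [hf0] with s hs
      simp [show f s = 0 from hs]
    · exact hf.continuousAt.div continuousAt_id ht
  have hfactor : cfc f c = cfc (fun t => f t / t) c * c := calc
    cfc f c = cfc (fun t => f t / t * t) c := cfc_congr fun t _ => by
      rcases eq_or_ne t 0 with rfl | ht
      · simpa using hf0.eq_of_nhds
      · exact (div_mul_cancel₀ _ ht).symm
    _ = cfc (fun t => f t / t) c * cfc (fun t => t) c := cfc_mul _ _ c hg.continuousOn
    _ = cfc (fun t => f t / t) c * c := by rw [cfc_id' ℝ c]
  rw [hfactor, mul_assoc, hcz, mul_zero]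

theorem norm_cfc_ramp_le_one (n : ℕ) (c : A) : ‖cfc (ramp n) c‖ ≤ 1 :=
  norm_cfc_le zero_le_one fun t _ => by
    rw [Real.norm_of_nonneg (ramp_nonneg n t)]
    exact ramp_le_one n t

variable [PartialOrder A] [StarOrderedRing A]

theorem le_of_two_nsmul_le_two_nsmul {x y : A} (h : 2 • x ≤ 2 • y) : x ≤ y := by
  have := smul_le_smul_of_nonneg_left h (by norm_num : (0 : ℝ) ≤ 2⁻¹)
  rwa [← ofNat_smul_eq_nsmul ℝ, ← ofNat_smul_eq_nsmul ℝ, inv_smul_smul₀ two_ne_zero,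
    inv_smul_smul₀ two_ne_zero] at this

theorem IsLUB.star_conjugate {ι : Type*} [Preorder ι] [IsDirected ι (· ≤ ·)] {a : ι → A} {s : A}
    (h : IsLUB (range a) s) (ha : Monotone a) (z : A) :
    IsLUB (range fun i => star z * a i * z) (star z * s * z) := by
  obtain ⟨T, hplus, hminus⟩ := exists_isUnit_add_and_isUnit_sub z
  have conj_mono : ∀ w : A, Monotone fun i => star w * a i * w :=
    fun w i j hij => star_left_conjugate_le_conjugate (ha hij) w
  have hsum := isLUB_range_add_of_monotone (h.star_conjugate_of_isUnit hplus)
    (h.star_conjugate_of_isUnit hminus) (conj_mono _) (conj_mono _)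
  have polarization : ∀ y : A, star (T + z) * y * (T + z) + star (T - z) * y * (T - z) =
      2 • (star T * y * T + star z * y * z) := fun y => by
    rw [star_add, star_sub]; noncomm_ring
  refine ⟨?_, fun x hx => ?_⟩
  · rintro _ ⟨i, rfl⟩
    exact star_left_conjugate_le_conjugate (h.1 ⟨i, rfl⟩) z
  have : 2 • (star T * s * T + star z * s * z) ≤ 2 • (star T * s * T + x) := by
    rw [← polarization]
    refine hsum.2 ?_
    rintro _ ⟨i, rfl⟩
    simp only [Pi.add_apply, polarization]
    gcongr
    · exact star_left_conjugate_le_conjugate (h.1 ⟨i, rfl⟩) T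
    · exact hx ⟨i, rfl⟩
  exact le_of_add_le_add_left (le_of_two_nsmul_le_two_nsmul this)

theorem tendsto_mul_cfc_ramp {c : A} (hc : 0 ≤ c) :
    Tendsto (fun n => c * cfc (ramp n) c) atTop (𝓝 c) := by
  have hbound : Tendsto (fun n : ℕ => 2 * (2⁻¹ : ℝ) ^ n) atTop (𝓝 0) := by
    simpa using (tendsto_pow_atTop_nhds_zero_of_lt_one (by norm_num : (0 : ℝ) ≤ 2⁻¹)
      (by norm_num)).const_mul 2
  rw [tendsto_iff_norm_sub_tendsto_zero]
  refine squeeze_zero (fun _ => norm_nonneg _) (fun n => ?_) hbound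
  rw [← norm_neg, neg_sub]
  have hcfc : c - c * cfc (ramp n) c = cfc (fun t => t - t * ramp n t) c := by
    rw [cfc_sub _ _ c, cfc_mul (fun t => t) (ramp n) c, cfc_id' ℝ c]
  rw [hcfc]
  exact norm_cfc_le (by positivity) fun t ht =>
    abs_sub_mul_ramp_le (spectrum_nonneg_of_nonneg hc ht) n

theorem mul_eq_zero_of_le_of_mul_eq_zero {p q r : A} (hp : 0 ≤ p) (hpq : p ≤ q)
    (hqr : q * r = 0) : p * r = 0 := by
  have hrpr : star r * p * r = 0 := le_antisymm
    (by simpa [mul_assoc, hqr] using star_left_conjugate_le_conjugate hpq r)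
    (star_left_conjugate_nonneg hp r)
  have hsqrt : CFC.sqrt p * r = 0 := by
    rw [← CStarRing.star_mul_self_eq_zero_iff, star_mul, (CFC.sqrt_nonneg p).isSelfAdjoint.star_eq]
    calc star r * CFC.sqrt p * (CFC.sqrt p * r) = star r * (CFC.sqrt p * CFC.sqrt p) * r := by
          simp only [mul_assoc]
      _ = 0 := by rw [CFC.sqrt_mul_sqrt_self p hp, hrpr]
  rw [← CFC.sqrt_mul_sqrt_self p hp, mul_assoc, hsqrt, mul_zero]

theorem mul_self_le_self_s12 {b : A} (h0 : 0 ≤ b) (h1 : b ≤ 1) : b * b ≤ b := by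
  set r := CFC.sqrt b
  have hr : r * r = b := CFC.sqrt_mul_sqrt_self b h0
  calc b * b = r * b * r := by rw [← hr]; simp only [mul_assoc]
    _ ≤ r * 1 * r := (CFC.sqrt_nonneg b).isSelfAdjoint.conjugate_le_conjugate h1
    _ = b := by rw [mul_one, hr]

theorem monotone_cfc_ramp (c : A) : Monotone fun n => cfc (ramp n) c :=
  fun _ _ hmn => cfc_mono fun t _ => monotone_ramp t hmn

section IsLUBCfcRamp

variable {c b : A}

theorem nonneg_of_isLUB_cfc_ramp (hb : IsLUB (range fun n => cfc (ramp n) c) b) : 0 ≤ b :=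
  (cfc_nonneg fun t _ => ramp_nonneg 0 t).trans (hb.1 ⟨0, rfl⟩)

theorem le_one_of_isLUB_cfc_ramp (hb : IsLUB (range fun n => cfc (ramp n) c) b) : b ≤ 1 :=
  hb.2 <| forall_mem_range.2 fun n => cfc_le_one _ _ fun t _ => ramp_le_one n t

theorem mul_cfc_ramp_eq_of_isLUB (hb : IsLUB (range fun n => cfc (ramp n) c) b) (n : ℕ) :
    b * cfc (ramp n) c = cfc (ramp n) c := by
  have hnext : (1 - cfc (ramp (n + 1)) c) * cfc (ramp n) c = 0 := by
    rw [sub_mul, one_mul, ← cfc_mul (ramp (n + 1)) (ramp n) c]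
    simp only [ramp_succ_mul_ramp, sub_self]
  have h := mul_eq_zero_of_le_of_mul_eq_zero (sub_nonneg.2 (le_one_of_isLUB_cfc_ramp hb))
    (sub_le_sub_left (hb.1 ⟨n + 1, rfl⟩) 1) hnext
  rwa [sub_mul, one_mul, sub_eq_zero, eq_comm] at h

theorem cfc_ramp_mul_eq_of_isLUB (hb : IsLUB (range fun n => cfc (ramp n) c) b) (n : ℕ) :
    cfc (ramp n) c * b = cfc (ramp n) c := by
  simpa [(nonneg_of_isLUB_cfc_ramp hb).isSelfAdjoint.star_eq,
    (cfc_predicate (ramp n) c).star_eq] using congr_arg star (mul_cfc_ramp_eq_of_isLUB hb n)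

theorem isIdempotentElem_of_isLUB_cfc_ramp (hb : IsLUB (range fun n => cfc (ramp n) c) b) :
    IsIdempotentElem b := by
  refine le_antisymm (mul_self_le_self_s12 (nonneg_of_isLUB_cfc_ramp hb) (le_one_of_isLUB_cfc_ramp hb))
    (hb.2 <| forall_mem_range.2 fun n => ?_)
  calc cfc (ramp n) c = b * cfc (ramp n) c * b := by
        rw [mul_cfc_ramp_eq_of_isLUB hb, cfc_ramp_mul_eq_of_isLUB hb]
    _ ≤ b * 1 * b := (nonneg_of_isLUB_cfc_ramp hb).isSelfAdjoint.conjugate_le_conjugate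
        (cfc_le_one _ _ fun t _ => ramp_le_one n t)
    _ = b * b := by rw [mul_one]

theorem mul_one_sub_eq_zero_of_isLUB_cfc_ramp (hb : IsLUB (range fun n => cfc (ramp n) c) b)
    (hc : 0 ≤ c) : c * (1 - b) = 0 := by
  have hzero : ∀ n, c * cfc (ramp n) c * (1 - b) = 0 := fun n => by
    rw [mul_assoc, mul_sub, mul_one, cfc_ramp_mul_eq_of_isLUB hb, sub_self, mul_zero]
  refine tendsto_nhds_unique ((tendsto_mul_cfc_ramp hc).mul_const (1 - b)) ?_
  simpa only [hzero] using tendsto_const_nhds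

theorem mul_eq_zero_of_isLUB_cfc_ramp (hb : IsLUB (range fun n => cfc (ramp n) c) b)
    (hc : IsSelfAdjoint c) {z : A} (hcz : c * z = 0) : b * z = 0 := by
  have hzero : ∀ n, star z * cfc (ramp n) c * z = 0 := fun n => by
    rw [mul_assoc, cfc_mul_eq_zero_of_mul_eq_zero (continuous_ramp n) (ramp_eventuallyEq_zero n)
      hc hcz, mul_zero]
  have hconj := hb.star_conjugate (monotone_cfc_ramp c) z
  simp only [hzero, range_const] at hconj
  rw [← CStarRing.star_mul_self_eq_zero_iff, star_mul,
    (nonneg_of_isLUB_cfc_ramp hb).isSelfAdjoint.star_eq]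
  calc star z * b * (b * z) = star z * (b * b) * z := by simp only [mul_assoc]
    _ = 0 := by rw [(isIdempotentElem_of_isLUB_cfc_ramp hb).eq, isLUB_singleton.unique hconj]

end IsLUBCfcRamp

end CStarAlgebra

/-- A unital C*-algebra which is monotone σ-complete (every norm-bounded monotone
increasing sequence of self-adjoint elements has a supremum among the self-adjoint
elements) is a Rickart C*-algebra. -/
theorem rickart_of_monotone_sigma_complete {A : Type*} [NormedRing A] [StarRing A]
    [CStarRing A] [CompleteSpace A] [NormedAlgebra ℂ A] [StarModule ℂ A]
    [PartialOrder A] [StarOrderedRing A]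
    (hmsc : ∀ a : ℕ → A, (∀ n, star (a n) = a n) → Monotone a →
      (∃ c : ℝ, ∀ n, ‖a n‖ ≤ c) →
      ∃ b : A, star b = b ∧ (∀ n, a n ≤ b) ∧
        ∀ x : A, star x = x → (∀ n, a n ≤ x) → b ≤ x) :
    ∀ a : A, ∃ p : A, star p = p ∧ p * p = p ∧
      {z : A | a * z = 0} = Set.range (fun z => p * z) := by
  let _ : CStarAlgebra A := { }
  intro a
  set c := star a * a
  have hc : 0 ≤ c := star_mul_self_nonneg a
  obtain ⟨b, hb_star, hb_ub, hb_least⟩ := hmsc (fun n => cfc (ramp n) c)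
    (fun n => (cfc_predicate (ramp n) c).star_eq) (monotone_cfc_ramp c)
    ⟨1, fun n => norm_cfc_ramp_le_one n c⟩
  -- an upper bound of the self-adjoint `cfc (ramp 0) c` is self-adjoint
  have hb : IsLUB (range fun n => cfc (ramp n) c) b :=
    ⟨forall_mem_range.2 hb_ub, fun x hx => hb_least x
      ((IsSelfAdjoint.iff_of_le (hx ⟨0, rfl⟩)).mp (cfc_predicate (ramp 0) c)).star_eq
      fun n => hx ⟨n, rfl⟩⟩
  refine ⟨1 - b, by simp [hb_star], (isIdempotentElem_of_isLUB_cfc_ramp hb).one_sub.eq, ?_⟩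
  ext z
  constructor
  · intro (haz : a * z = 0)
    have hbz : b * z = 0 :=
      mul_eq_zero_of_isLUB_cfc_ramp hb hc.isSelfAdjoint (by rw [mul_assoc, haz, mul_zero])
    exact ⟨z, by simp [sub_mul, hbz]⟩
  · rintro ⟨w, rfl⟩
    have hap : a * (1 - b) = 0 :=
      mul_eq_zero_of_star_mul_self_mul_eq_zero (mul_one_sub_eq_zero_of_isLUB_cfc_ramp hb hc)
    simp [← mul_assoc, hap]
end

section
/- Let A be the set of bounded complex-valued functions f on ℝ such that {x : f(x) ≠ 0} is countable. Then A is a monotone σ-complete C*-algebra (under pointwise operations and sup norm) that has no unit element; consequently A is not a Rickart C*-algebra. -/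
/-!
Self-adjoint elements of `ℓ∞(ℝ)` are the real-valued functions, and `cleBdd` is the pointwise
order, since a pointwise nonnegative bounded function has a bounded square root. Hence the
pointwise supremum of a norm-bounded sequence of self-adjoint elements is their least upper
bound, and its support lies in the countable union of their supports. A left identity `e` of
`A` would satisfy `e x = (e * δₓ) x = 1` for every `x`, so its support would be all of `ℝ`.
Finally, in a Rickart algebra the annihilator of `0`, which is all of `A`, equals `p A` for an
idempotent `p`, and such a `p` is a left identity.
-/

open scoped ENNReal

/-- The C*-algebra `B(ℝ)` of all bounded complex-valued functions on `ℝ`. -/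
noncomputable abbrev BddFun : Type := lp (fun _ : ℝ => ℂ) ∞

/-- The order induced by the positive cone `{h* h}`. -/
def cleBdd (f g : BddFun) : Prop := ∃ h : BddFun, g - f = star h * h

open scoped ComplexOrder Topology
open Filter Function Set

theorem Complex.isLUB_image_ofReal {s : Set ℝ} {r : ℝ} (h : IsLUB s r) :
    IsLUB (ofReal '' s) (r : ℂ) := by
  refine ⟨?_, fun z hz => ?_⟩
  · rintro _ ⟨x, hx, rfl⟩
    exact real_le_real.2 (h.1 hx)
  · obtain ⟨x, hx⟩ := h.nonempty
    have hz_re : z = z.re := eq_re_of_ofReal_le (hz ⟨x, hx, rfl⟩)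
    rw [hz_re, real_le_real]
    exact h.2 fun y hy => real_le_real.1 (hz_re ▸ hz ⟨y, hy, rfl⟩)

theorem Function.support_subset_iUnion_of_isLUB {ι α β : Type*} [Nonempty ι] [PartialOrder β]
    [Zero β] {f : ι → α → β} {g : α → β} (h : ∀ x, IsLUB (range fun i => f i x) (g x)) :
    support g ⊆ ⋃ i, support (f i) := by
  intro x hx
  by_contra hf
  simp only [mem_iUnion, mem_support, not_exists, not_not] at hf
  have hx_lub := h x
  simp only [hf, range_const] at hx_lub
  exact hx (hx_lub.unique isLUB_singleton)

namespace lp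

variable {ι : Type*}

variable (ι) in
def countableSupport : NonUnitalStarSubalgebra ℂ (lp (fun _ : ι => ℂ) ∞) where
  carrier := {f | (support f).Countable}
  zero_mem' := by
    change (support ⇑(0 : lp (fun _ : ι => ℂ) ∞)).Countable
    rw [coeFn_zero, support_zero]
    exact countable_empty
  add_mem' {f g} hf hg := (hf.union hg).mono (by rw [coeFn_add]; exact support_add _ _)
  mul_mem' {f g} _ hg := hg.mono (by rw [infty_coeFn_mul]; exact support_mul_subset_right _ _)
  smul_mem' c f hf := hf.mono (by rw [coeFn_smul]; exact support_const_smul_subset c _)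
  star_mem' {f} hf := by
    change (support ⇑(star f)).Countable
    rw [coeFn_star]
    exact (support_comp_eq star star_eq_zero f).symm ▸ hf

theorem mem_countableSupport {f : lp (fun _ : ι => ℂ) ∞} :
    f ∈ countableSupport ι ↔ (support f).Countable :=
  Iff.rfl

theorem isClosed_countableSupport :
    IsClosed (countableSupport ι : Set (lp (fun _ : ι => ℂ) ∞)) := by
  refine IsSeqClosed.isClosed fun u f hu hlim => (countable_iUnion hu).mono fun i hfi => ?_
  by_contra h
  simp only [mem_iUnion, mem_support, not_exists, not_not] at h
  have hlim_i : Tendsto (fun n => u n i) atTop (𝓝 (f i)) :=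
    ((continuous_apply i).comp uniformContinuous_coe.continuous).tendsto f |>.comp hlim
  exact hfi (tendsto_nhds_unique hlim_i (by simp only [h, tendsto_const_nhds]))

theorem not_exists_left_identity_countableSupport [Uncountable ι] :
    ¬∃ e ∈ countableSupport ι, ∀ f ∈ countableSupport ι, e * f = f := by
  classical
  rintro ⟨e, he, hunit⟩
  have he_one : ∀ i, e i = 1 := fun i => by
    have hsingle : lp.single ∞ i (1 : ℂ) ∈ countableSupport ι :=
      (countable_singleton i).mono fun j hj =>
        by_contra fun hji => hj (lp.single_apply_ne ∞ i 1 hji)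
    simpa [infty_coeFn_mul, lp.single_apply_self] using
      congrFun (congrArg (⇑) (hunit _ hsingle)) i
  have he_supp : support e = univ := eq_univ_of_forall fun i => by simp [he_one i]
  rw [mem_countableSupport, he_supp] at he
  exact not_countable_univ he

theorem exists_eq_star_mul_self_iff {d : lp (fun _ : ι => ℂ) ∞} :
    (∃ h, d = star h * h) ↔ ∀ i, 0 ≤ d i := by
  constructor
  · rintro ⟨h, rfl⟩ i
    rw [infty_coeFn_mul, coeFn_star]
    exact star_mul_self_nonneg (h i)
  · intro hd
    have hmem : Memℓp (fun i => ((√‖d i‖ : ℝ) : ℂ)) ∞ := memℓp_infty ⟨√‖d‖, by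
      rintro _ ⟨i, rfl⟩
      simp only [Complex.norm_real, Real.norm_of_nonneg (Real.sqrt_nonneg _)]
      exact Real.sqrt_le_sqrt (norm_apply_le_norm ENNReal.top_ne_zero d i)⟩
    refine ⟨⟨_, hmem⟩, ext (funext fun i => ?_)⟩
    rw [infty_coeFn_mul, coeFn_star, Pi.mul_apply, Pi.star_apply]
    change d i = star ((√‖d i‖ : ℝ) : ℂ) * ((√‖d i‖ : ℝ) : ℂ)
    rw [Complex.star_def, Complex.conj_ofReal, ← Complex.ofReal_mul,
      Real.mul_self_sqrt (norm_nonneg _)]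
    exact Complex.eq_coe_norm_of_nonneg (hd i)

theorem exists_isSelfAdjoint_forall_isLUB {a : ℕ → lp (fun _ : ι => ℂ) ∞}
    (ha : ∀ n, IsSelfAdjoint (a n)) {c : ℝ} (hc : ∀ n, ‖a n‖ ≤ c) :
    ∃ b : lp (fun _ : ι => ℂ) ∞, IsSelfAdjoint b ∧ ∀ i, IsLUB (range fun n => a n i) (b i) := by
  have ha_re : ∀ n i, ((a n i).re : ℂ) = a n i := fun n i =>
    Complex.conj_eq_iff_re.1 (congrFun (congrArg (⇑) (ha n)) i)
  have ha_bdd : ∀ n i, |(a n i).re| ≤ c := fun n i =>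
    (Complex.abs_re_le_norm _).trans ((norm_apply_le_norm ENNReal.top_ne_zero _ i).trans (hc n))
  set r : ι → ℝ := fun i => ⨆ n, (a n i).re
  have hr : ∀ i, IsLUB (range fun n => (a n i).re) (r i) := fun i =>
    isLUB_ciSup ⟨c, by rintro _ ⟨n, rfl⟩; exact (abs_le.1 (ha_bdd n i)).2⟩
  have hr_bdd : ∀ i, |r i| ≤ c := fun i => abs_le.2
    ⟨(abs_le.1 (ha_bdd 0 i)).1.trans ((hr i).1 ⟨0, rfl⟩),
      (hr i).2 (by rintro _ ⟨n, rfl⟩; exact (abs_le.1 (ha_bdd n i)).2)⟩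
  refine ⟨⟨fun i => (r i : ℂ), memℓp_infty ⟨c, ?_⟩⟩, ?_, fun i => ?_⟩
  · rintro _ ⟨i, rfl⟩
    simpa using hr_bdd i
  · exact ext (funext fun i => Complex.conj_ofReal _)
  · simpa only [← range_comp, Function.comp_def, ha_re] using Complex.isLUB_image_ofReal (hr i)

end lp

theorem cleBdd_iff {f g : BddFun} : cleBdd f g ↔ ∀ x, f x ≤ g x := by
  simp only [cleBdd, lp.exists_eq_star_mul_self_iff, lp.coeFn_sub, Pi.sub_apply, sub_nonneg]

/-- The set of bounded functions on `ℝ` with countable support is a norm-closed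
*-subalgebra of `B(ℝ)`; it is monotone σ-complete, has no unit, and hence is not a
Rickart C*-algebra. -/
theorem countable_support_algebra_properties :
    let A : Set BddFun := {f | Set.Countable {x : ℝ | f x ≠ 0}}
    -- A is a norm-closed *-subalgebra (so a C*-algebra)
    ((0 : BddFun) ∈ A ∧ (∀ f ∈ A, ∀ g ∈ A, f + g ∈ A) ∧
      (∀ (c : ℂ), ∀ f ∈ A, c • f ∈ A) ∧ (∀ f ∈ A, ∀ g ∈ A, f * g ∈ A) ∧
      (∀ f ∈ A, star f ∈ A) ∧ IsClosed A) ∧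
    -- A is monotone σ-complete
    (∀ a : ℕ → BddFun, (∀ n, a n ∈ A) → (∀ n, star (a n) = a n) →
      (∀ n, cleBdd (a n) (a (n + 1))) → (∃ c : ℝ, ∀ n, ‖a n‖ ≤ c) →
      ∃ b ∈ A, star b = b ∧ (∀ n, cleBdd (a n) b) ∧
        ∀ x ∈ A, star x = x → (∀ n, cleBdd (a n) x) → cleBdd b x) ∧
    -- A has no unit
    (¬∃ e ∈ A, ∀ f ∈ A, e * f = f ∧ f * e = f) ∧
    -- consequently A is not a Rickart C*-algebra
    ¬(∀ a ∈ A, ∃ p ∈ A, star p = p ∧ p * p = p ∧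
        {z | z ∈ A ∧ a * z = 0} = {w | ∃ z ∈ A, w = p * z}) := by
  intro A
  let S := lp.countableSupport ℝ
  refine ⟨⟨S.zero_mem, fun f hf g hg => S.add_mem hf hg, fun c f hf => S.smul_mem c hf,
      fun f hf g hg => S.mul_mem hf hg, fun f hf => star_mem (s := S) hf,
      lp.isClosed_countableSupport⟩, ?_, ?_, ?_⟩
  · rintro a ha ha_sa - ⟨c, hc⟩
    obtain ⟨b, hb_sa, hb⟩ := lp.exists_isSelfAdjoint_forall_isLUB ha_sa hc
    refine ⟨b, (countable_iUnion ha).mono (support_subset_iUnion_of_isLUB hb), hb_sa,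
      fun n => cleBdd_iff.2 fun i => (hb i).1 ⟨n, rfl⟩, fun x _ _ hx => cleBdd_iff.2 fun i => ?_⟩
    exact (hb i).2 (by rintro _ ⟨n, rfl⟩; exact cleBdd_iff.1 (hx n) i)
  · rintro ⟨e, he, hunit⟩
    exact lp.not_exists_left_identity_countableSupport ⟨e, he, fun f hf => (hunit f hf).1⟩
  · intro hRickart
    obtain ⟨p, hp, -, hp_idem, hp_ann⟩ := hRickart 0 S.zero_mem
    refine lp.not_exists_left_identity_countableSupport ⟨p, hp, fun f hf => ?_⟩
    have hf_ann : f ∈ {z | z ∈ A ∧ 0 * z = 0} := ⟨hf, zero_mul f⟩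
    obtain ⟨z, -, rfl⟩ := hp_ann ▸ hf_ann
    rw [← mul_assoc, hp_idem]
end

section
/- Let B be a C*-algebra and x ∈ B. If x has an annihilating right projection, then it is unique. Moreover, if M₀ is any maximal abelian *-subalgebra of B containing x, then the annihilating right projection of x belongs to M₀. -/
/-- `e` is an annihilating right projection (ARP) for `x`. -/
def IsARP {B : Type*} [NonUnitalNormedRing B] [StarRing B] (x e : B) : Prop :=
  star e = e ∧ e * e = e ∧ x * e = x ∧ ∀ y : B, x * y = 0 → e * y = 0

/-- An annihilating right projection is unique, and it lies in any m.a.s.a. containing `x`. -/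
theorem arp_unique_and_mem_masa {B : Type*} [NonUnitalNormedRing B] [StarRing B]
    [CStarRing B] [CompleteSpace B] [NormedSpace ℂ B] [IsScalarTower ℂ B B]
    [SMulCommClass ℂ B B] [StarModule ℂ B] (x : B) :
    (∀ e f : B, IsARP x e → IsARP x f → e = f) ∧
    (∀ M₀ : Set B, IsMasa M₀ → x ∈ M₀ → ∀ e : B, IsARP x e → e ∈ M₀) := by
  constructor
  · rintro e f ⟨he, hee, hxe, hAe⟩ ⟨hf, hff, hxf, hAf⟩
    have key : ∀ p q : B, star p = p → p * p = p → x * p = x →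
        (∀ y : B, x * y = 0 → p * y = 0) → star q = q → q * q = q → x * q = x →
        p * q = p := by
      intro p q hp hpp hxp hAp hq hqq hxq
      have h1 : x * (q * p - p) = 0 := by
        rw [mul_sub, ← mul_assoc, hxq, hxp, sub_self]
      have hpqp : p * q * p = p := by
        have := hAp _ h1
        rwa [mul_sub, ← mul_assoc, hpp, sub_eq_zero] at this
      have e1 : p * (q * p) = p := by rw [← mul_assoc, hpqp]
      have e2 : p * q * (q * p) = p := by
        rw [mul_assoc p q, ← mul_assoc q q, hqq, ← mul_assoc, hpqp]
      have hz : (p - p * q) * star (p - p * q) = 0 := by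
        rw [star_sub, star_mul, hp, hq, sub_mul, mul_sub, mul_sub, hpp, e1, hpqp, e2,
          sub_self]
      have := (CStarRing.mul_star_self_eq_zero_iff _).mp hz
      rw [sub_eq_zero] at this
      exact this.symm
    have h1 : e * f = e := key e f he hee hxe hAe hf hff hxf
    have h2 : f * e = f := key f e hf hff hxf hAf he hee hxe
    have h3 : f * e = e := by
      have := congrArg star h1
      rwa [star_mul, he, hf] at this
    rw [← h2, h3]
  · rintro M₀ ⟨⟨h0, hadd, hsmul, hmul, hstar⟩, hcomm, hmax⟩ hxM e ⟨he, hee, hxe, hA⟩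
    -- e commutes with M₀
    have step1 : ∀ m ∈ M₀, e * m * e = e * m := by
      intro m hm
      have h1 : x * (m * e - m) = 0 := by
        rw [mul_sub, ← mul_assoc, hcomm x hxM m hm, mul_assoc, hxe, ← hcomm x hxM m hm, sub_self]
      have := hA _ h1
      rwa [mul_sub, ← mul_assoc, sub_eq_zero] at this
    have hcom : ∀ m ∈ M₀, e * m = m * e := by
      intro m hm
      have h2 := step1 (star m) (hstar m hm)
      have h3 := congrArg star h2
      rw [star_mul, star_mul, he, star_star] at h3
      rw [← mul_assoc, step1 m hm] at h3
      exact h3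
    -- the adjoined star subalgebra
    set T : Set B := (NonUnitalStarAlgebra.adjoin ℂ (M₀ ∪ {e}) : Set B) with hT
    have hmemT : ∀ b : B, b ∈ T ↔ b ∈ NonUnitalStarAlgebra.adjoin ℂ (M₀ ∪ {e}) :=
      fun _ => Iff.rfl
    have hgen : ∀ a ∈ M₀ ∪ {e}, ∀ b ∈ M₀ ∪ {e}, Commute a b := by
      rintro a (ha | ha) b (hb | hb)
      · exact hcomm a ha b hb
      · rw [Set.mem_singleton_iff] at hb; subst hb; exact (hcom a ha).symm
      · rw [Set.mem_singleton_iff] at ha; subst ha; exact hcom b hb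
      · rw [Set.mem_singleton_iff] at ha hb; subst ha; subst hb; exact Commute.refl _
    have hgenstar : ∀ a ∈ M₀ ∪ {e}, star a ∈ M₀ ∪ {e} := by
      rintro a (ha | ha)
      · exact Or.inl (hstar a ha)
      · rw [Set.mem_singleton_iff] at ha; subst ha; exact Or.inr (by simp [he])
    have inner : ∀ a ∈ M₀ ∪ {e}, ∀ b ∈ NonUnitalStarAlgebra.adjoin ℂ (M₀ ∪ {e}),
        Commute a b ∧ Commute (star a) b := by
      intro a ha b hb
      induction hb using NonUnitalStarAlgebra.adjoin_induction with
      | mem y hy => exact ⟨hgen a ha y hy, hgen (star a) (hgenstar a ha) y hy⟩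
      | add _ _ _ _ h1 h2 => exact ⟨h1.1.add_right h2.1, h1.2.add_right h2.2⟩
      | zero => exact ⟨Commute.zero_right _, Commute.zero_right _⟩
      | mul _ _ _ _ h1 h2 => exact ⟨h1.1.mul_right h2.1, h1.2.mul_right h2.2⟩
      | smul c _ _ h1 => exact ⟨h1.1.smul_right c, h1.2.smul_right c⟩
      | star y hy h1 =>
        refine ⟨?_, h1.1.star_star⟩
        have := h1.2.star_star
        rwa [star_star] at this
    have main : ∀ a ∈ NonUnitalStarAlgebra.adjoin ℂ (M₀ ∪ {e}),
        ∀ b ∈ NonUnitalStarAlgebra.adjoin ℂ (M₀ ∪ {e}), Commute a b := by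
      intro a ha
      induction ha using NonUnitalStarAlgebra.adjoin_induction with
      | mem y hy => exact fun b hb => (inner y hy b hb).1
      | add _ _ _ _ h1 h2 => exact fun b hb => (h1 b hb).add_left (h2 b hb)
      | zero => exact fun b _ => Commute.zero_left b
      | mul _ _ _ _ h1 h2 => exact fun b hb => (h1 b hb).mul_left (h2 b hb)
      | smul c _ _ h1 => exact fun b hb => (h1 b hb).smul_left c
      | star y hy h1 =>
        intro b hb
        have := (h1 (star b) (star_mem hb)).star_star
        rwa [star_star] at this
    have hM₀T : M₀ ⊆ T := fun m hm =>
      NonUnitalStarAlgebra.subset_adjoin ℂ _ (Or.inl hm)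
    have heT : e ∈ T := NonUnitalStarAlgebra.subset_adjoin ℂ _ (Or.inr rfl)
    have hTsub : (0:B) ∈ T ∧ (∀ a ∈ T, ∀ b ∈ T, a + b ∈ T) ∧
        (∀ (c : ℂ), ∀ a ∈ T, c • a ∈ T) ∧ (∀ a ∈ T, ∀ b ∈ T, a * b ∈ T) ∧
        (∀ a ∈ T, star a ∈ T) := by
      refine ⟨zero_mem _, fun a ha b hb => add_mem ha hb, fun c a ha => SMulMemClass.smul_mem c ha,
        fun a ha b hb => mul_mem ha hb, fun a ha => star_mem ha⟩
    have hTeq : T = M₀ := hmax T hTsub (fun a ha b hb => main a ha b hb) hM₀T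
    rw [← hTeq]
    exact heT
end

section
/- Let ℓ∞ be the C*-algebra of bounded complex sequences, ω a point of βℕ ∖ ℕ (equivalently, a free ultrafilter on ℕ, giving a character of ℓ∞ vanishing on c₀-like functions), and A = {f ∈ ℓ∞ : ω(f) = 0} the corresponding maximal ideal. Then A is not monotone σ-complete: the sequence of projections eₙ = χ_{1,...,n} is norm-bounded and increasing in A but has no least upper bound in A_sa. -/
open scoped ENNReal

/-- The C*-algebra `ℓ∞` of bounded complex sequences. -/
noncomputable abbrev LinfSeq : Type := lp (fun _ : ℕ => ℂ) ∞

/-- The order induced by the positive cone `{h* h}`. -/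
def cleSeq (f g : LinfSeq) : Prop := ∃ h : LinfSeq, g - f = star h * h

noncomputable def mkLinf (f : ℕ → ℂ) (C : ℝ) (h : ∀ k, ‖f k‖ ≤ C) : LinfSeq :=
  ⟨f, memℓp_infty ⟨C, by rintro x ⟨k, rfl⟩; exact h k⟩⟩

@[simp] lemma mkLinf_apply (f : ℕ → ℂ) (C : ℝ) (h : ∀ k, ‖f k‖ ≤ C) (k : ℕ) :
    (mkLinf f C h) k = f k := rfl

noncomputable def deltaLinf (n : ℕ) : LinfSeq :=
  mkLinf (fun k => if k = n then 1 else 0) 1 (by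
    intro k; split <;> simp)

@[simp] lemma deltaLinf_apply (n k : ℕ) :
    (deltaLinf n) k = if k = n then 1 else 0 := rfl

@[simp] lemma linf_mul_apply (f g : LinfSeq) (k : ℕ) : (f * g) k = f k * g k := by
  rw [lp.infty_coeFn_mul]; rfl

@[simp] lemma linf_star_apply (f : LinfSeq) (k : ℕ) :
    (star f) k = (starRingEnd ℂ) (f k) := by
  rw [lp.coeFn_star]; rfl

@[simp] lemma linf_sub_apply (f g : LinfSeq) (k : ℕ) : (f - g) k = f k - g k := by
  rw [lp.coeFn_sub]; rfl

@[simp] lemma linf_add_apply (f g : LinfSeq) (k : ℕ) : (f + g) k = f k + g k := by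
  rw [lp.coeFn_add]; rfl

@[simp] lemma linf_one_apply (k : ℕ) : (1 : LinfSeq) k = 1 := by
  rw [lp.infty_coeFn_one]; rfl

@[simp] lemma linf_smul_apply (c : ℂ) (f : LinfSeq) (k : ℕ) : (c • f) k = c * f k := by
  rw [lp.coeFn_smul]; rfl

/-- a pointwise nonnegative real element of ℓ∞ is of the form h* h -/
lemma linf_exists_sq (g : LinfSeq) (hg : ∀ k, ∃ r : ℝ, 0 ≤ r ∧ g k = r) :
    ∃ h : LinfSeq, g = star h * h := by
  refine ⟨mkLinf (fun k => (Real.sqrt (g k).re : ℂ)) (Real.sqrt ‖g‖) ?_, ?_⟩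
  · intro k
    obtain ⟨r, hr0, hr⟩ := hg k
    have h1 : ‖g k‖ ≤ ‖g‖ := lp.norm_apply_le_norm ENNReal.top_ne_zero g k
    simp only [hr, Complex.ofReal_re, Complex.norm_real, Real.norm_eq_abs,
      Complex.norm_real] at h1 ⊢
    rw [abs_of_nonneg (Real.sqrt_nonneg _)]
    exact Real.sqrt_le_sqrt (le_trans (le_abs_self r) h1)
  · apply lp.ext; funext k
    obtain ⟨r, hr0, hr⟩ := hg k
    simp only [linf_mul_apply, linf_star_apply, mkLinf_apply, hr, Complex.ofReal_re]
    rw [Complex.conj_ofReal, ← Complex.ofReal_mul, Real.mul_self_sqrt hr0]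

lemma omega_nonneg (ω : LinfSeq →⋆ₐ[ℂ] ℂ) (g : LinfSeq)
    (hg : ∀ k, ∃ r : ℝ, 0 ≤ r ∧ g k = r) : ∃ r : ℝ, 0 ≤ r ∧ ω g = r := by
  obtain ⟨h, rfl⟩ := linf_exists_sq g hg
  refine ⟨Complex.normSq (ω h), Complex.normSq_nonneg _, ?_⟩
  rw [map_mul, map_star, Complex.star_def]
  exact (Complex.normSq_eq_conj_mul_self).symm

lemma omega_delta (ω : LinfSeq →⋆ₐ[ℂ] ℂ)
    (hωfree : ∀ n : ℕ, ∃ f : LinfSeq, ω f ≠ f n) (n : ℕ) : ω (deltaLinf n) = 0 := by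
  by_contra hne
  have hidem : deltaLinf n * deltaLinf n = deltaLinf n := by
    apply lp.ext; funext k
    simp only [linf_mul_apply, deltaLinf_apply]
    split <;> simp
  have h1 : ω (deltaLinf n) = 1 := by
    have hh : ω (deltaLinf n) * ω (deltaLinf n) = ω (deltaLinf n) := by
      rw [← map_mul, hidem]
    have h0 : ω (deltaLinf n) * (ω (deltaLinf n) - 1) = 0 := by ring_nf; linear_combination hh
    rcases mul_eq_zero.mp h0 with h | h
    · exact absurd h hne
    · exact sub_eq_zero.mp h

  obtain ⟨f, hf⟩ := hωfree n
  apply hf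
  have hmul : f * deltaLinf n = (f n) • deltaLinf n := by
    apply lp.ext; funext k
    simp only [linf_mul_apply, deltaLinf_apply, linf_smul_apply]
    rcases eq_or_ne k n with rfl | hk
    · simp
    · simp [hk]
  have := congrArg ω hmul
  rw [map_mul, map_smul, h1] at this
  simpa using this

/-- Let `ω` be a character of `ℓ∞` which is not evaluation at any point of `ℕ`
(i.e. a point of `βℕ ∖ ℕ`), and let `A = ker ω`.  Then the projections
`eₙ = χ_{1,…,n}` form a norm-bounded increasing sequence in `A` with no least upper
bound among the self-adjoint elements of `A`; in particular `A` is not monotone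
σ-complete. -/
theorem kernel_of_free_character_not_monotone_sigma_complete
    (ω : LinfSeq →⋆ₐ[ℂ] ℂ) (hω1 : ω 1 = 1)
    (hωfree : ∀ n : ℕ, ∃ f : LinfSeq, ω f ≠ f n)
    (A : Set LinfSeq) (hA : A = {f | ω f = 0})
    (e : ℕ → LinfSeq) (he : ∀ n k, (e n) k = if 1 ≤ k ∧ k ≤ n then 1 else 0) :
    (∀ n, e n ∈ A) ∧ (∀ n, star (e n) = e n) ∧ (∀ n, ‖e n‖ ≤ 1) ∧
      (∀ n, cleSeq (e n) (e (n + 1))) ∧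
      ¬∃ b ∈ A, star b = b ∧ (∀ n, cleSeq (e n) b) ∧
        ∀ x ∈ A, star x = x → (∀ n, cleSeq (e n) x) → cleSeq b x := by
  subst hA
  -- e (n+1) = e n + δ (n+1)
  have hstep : ∀ n, e (n + 1) = e n + deltaLinf (n + 1) := by
    intro n
    apply lp.ext; funext k
    simp only [linf_add_apply, he, deltaLinf_apply]
    rcases eq_or_ne k (n + 1) with rfl | hk
    · simp
    · have : (1 ≤ k ∧ k ≤ n + 1) ↔ (1 ≤ k ∧ k ≤ n) := by omega
      rw [if_congr this rfl rfl, if_neg hk, add_zero]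
  have he0 : e 0 = 0 := by
    apply lp.ext; funext k
    simp only [he, lp.coeFn_zero, Pi.zero_apply]
    rw [if_neg (by omega)]
  have hωe : ∀ n, ω (e n) = 0 := by
    intro n
    induction n with
    | zero => rw [he0, map_zero]
    | succ n ih => rw [hstep, map_add, ih, omega_delta ω hωfree, add_zero]
  refine ⟨hωe, ?_, ?_, ?_, ?_⟩
  · intro n
    apply lp.ext; funext k
    simp only [linf_star_apply, he]
    split <;> simp
  · intro n
    apply lp.norm_le_of_forall_le zero_le_one
    intro k
    rw [he]
    split <;> simp
  · intro n
    show ∃ h : LinfSeq, e (n + 1) - e n = star h * h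
    refine ⟨deltaLinf (n + 1), ?_⟩
    rw [hstep, add_sub_cancel_left]
    apply lp.ext; funext k
    simp only [linf_mul_apply, linf_star_apply, deltaLinf_apply]
    split <;> simp
  · rintro ⟨b, hbA, hbstar, hub, -⟩
    -- entries of b are real
    have hre : ∀ k, b k = ((b k).re : ℂ) := by
      intro k
      have : (starRingEnd ℂ) (b k) = b k := by
        conv_rhs => rw [← hbstar]
        rw [linf_star_apply]
      exact (Complex.conj_eq_iff_re.mp this).symm
    -- for k ≥ 1, (b k).re ≥ 1
    have hge : ∀ k : ℕ, 1 ≤ k → 1 ≤ (b k).re := by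
      intro k hk
      obtain ⟨h, hh⟩ : ∃ h : LinfSeq, b - e k = star h * h := hub k
      have hcoord : (b - e k) k = (star h * h) k := by rw [hh]
      simp only [linf_sub_apply, linf_mul_apply, linf_star_apply, he] at hcoord
      rw [if_pos ⟨hk, le_refl k⟩] at hcoord
      have : b k - 1 = (Complex.normSq (h k) : ℂ) := by
        rw [hcoord]
        exact (Complex.normSq_eq_conj_mul_self).symm
      have hre' := congrArg Complex.re this
      simp only [Complex.sub_re, Complex.one_re, Complex.ofReal_re] at hre'
      nlinarith [Complex.normSq_nonneg (h k)]
    -- the auxiliary element g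
    set c : ℝ := 1 + |(b 0).re| with hc
    set g : LinfSeq := b - 1 + (c : ℂ) • deltaLinf 0 with hg
    have hgnn : ∀ k, ∃ r : ℝ, 0 ≤ r ∧ g k = r := by
      intro k
      rcases Nat.eq_zero_or_pos k with rfl | hk
      · refine ⟨(b 0).re + |(b 0).re|, by linarith [neg_abs_le (b 0).re], ?_⟩
        simp only [hg, linf_add_apply, linf_sub_apply, linf_smul_apply,
          deltaLinf_apply, linf_one_apply, if_pos rfl, mul_one, hc]
        rw [hre 0]
        push_cast
        simp only [Complex.ofReal_re]
        ring
      · refine ⟨(b k).re - 1, by linarith [hge k hk], ?_⟩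
        simp only [hg, linf_add_apply, linf_sub_apply, linf_smul_apply,
          deltaLinf_apply, linf_one_apply, if_neg (by omega : ¬ k = 0), mul_zero]
        rw [hre k]
        push_cast
        simp only [Complex.ofReal_re]
        ring
    obtain ⟨r, hr0, hr⟩ := omega_nonneg ω g hgnn
    have : ω g = -1 := by
      rw [hg, map_add, map_sub, map_smul, hω1, hbA, omega_delta ω hωfree]
      simp
    rw [this] at hr
    have : r = -1 := by
      have := congrArg Complex.re hr
      simpa using this.symm
    linarith
end
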